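/- arXiv:1610.04499 — 2 statements merged into one kernel-verified Lean document; each statement's English description precedes it below -/
import Mathlib

section
/- Let G be a connected finite simple graph of order n ≥ 12 in which every pair of distinct nonadjacent vertices has degree sum at least n − 2, and suppose m(G,2) > 2. Let I be a set of maximum cardinality among all closures ⟨A⟩ of two-element sets A ⊆ V(G) under 2-neighbor bootstrap percolation, and let U = V(G) ∖ I. Then the set I₀ = {v ∈ I : v has no neighbor in U} has at least two elements. -/
open Finset
open scoped Classical

/-- One step of the `r`-neighbor bootstrap percolation process: all currently
active vertices stay active, and every vertex with at least `r` active
neighbors becomes active. -/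
noncomputable def bootStep {V : Type*} [Fintype V] (G : SimpleGraph V) (r : ℕ)
    (A : Finset V) : Finset V :=
  A ∪ Finset.univ.filter (fun v => r ≤ (G.neighborFinset v ∩ A).card)

/-- The closure of `A` under `r`-neighbor bootstrap percolation, i.e. `⋃ₜ Aₜ`.
Since the process is monotone on a finite vertex set, iterating `|V|` times
reaches the fixed point. -/
noncomputable def bootClosure {V : Type*} [Fintype V] (G : SimpleGraph V) (r : ℕ)
    (A : Finset V) : Finset V :=
  (bootStep G r)^[Fintype.card V] A

/-- `G` `r`-percolates from the initially active set `A`. -/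
def Percolates {V : Type*} [Fintype V] (G : SimpleGraph V) (r : ℕ)
    (A : Finset V) : Prop :=
  ∃ t : ℕ, (bootStep G r)^[t] A = Finset.univ

/-- `m(G, r)`: the minimum size of an `r`-contagious set in `G`. -/
noncomputable def minContagious {V : Type*} [Fintype V] (G : SimpleGraph V) (r : ℕ) : ℕ :=
  sInf {k : ℕ | ∃ A : Finset V, A.card = k ∧ Percolates G r A}

section Infra

variable {V : Type*} [Fintype V] (G : SimpleGraph V)

lemma subset_bootStep (r : ℕ) (A : Finset V) : A ⊆ bootStep G r A :=
  Finset.subset_union_left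

lemma bootStep_univ (r : ℕ) : bootStep G r (Finset.univ : Finset V) = Finset.univ := by
  apply Finset.Subset.antisymm
  · intro x _; exact Finset.mem_univ x
  · exact subset_bootStep G r _

/-- A set is closed for 2-neighbour bootstrap if every outside vertex has at
most one neighbour inside. -/
def IsClosedSet (T : Finset V) : Prop :=
  ∀ v : V, v ∉ T → ((G.neighborFinset v) ∩ T).card ≤ 1

lemma bootStep_eq_iff (T : Finset V) :
    bootStep G 2 T = T ↔ IsClosedSet G T := by
  constructor
  · intro h v hv
    by_contra hc
    push_neg at hc
    have hvmem : v ∈ bootStep G 2 T := by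
      unfold bootStep
      refine Finset.mem_union_right _ ?_
      simp only [Finset.mem_filter, Finset.mem_univ, true_and]
      omega
    rw [h] at hvmem
    exact hv hvmem
  · intro h
    apply Finset.Subset.antisymm
    · intro v hv
      unfold bootStep at hv
      rcases Finset.mem_union.mp hv with h1 | h1
      · exact h1
      · simp only [Finset.mem_filter, Finset.mem_univ, true_and] at h1
        by_contra hvT
        have := h v hvT
        omega
    · exact subset_bootStep G 2 T

lemma bootClosure_fixed (r : ℕ) (A : Finset V) :
    bootStep G r (bootClosure G r A) = bootClosure G r A := by
  set f := bootStep G r with hf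
  have hsub : ∀ B : Finset V, B ⊆ f B := fun B => subset_bootStep G r B
  have hstep : ∀ k : ℕ, f^[k] A = f^[k+1] A ∨ k ≤ (f^[k] A).card := by
    intro k
    induction k with
    | zero => exact Or.inr (Nat.zero_le _)
    | succ k ih =>
      have e1 : f^[k+1] A = f (f^[k] A) := Function.iterate_succ_apply' f k A
      have e2 : f^[k+2] A = f (f^[k+1] A) := Function.iterate_succ_apply' f (k+1) A
      by_cases he : f^[k] A = f^[k+1] A
      · left
        rw [e1, e2, ← he]
      · right
        rcases ih with h | h
        · exact absurd h he
        · have hss : f^[k] A ⊂ f^[k+1] A := by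
            refine Finset.ssubset_iff_subset_ne.mpr ⟨?_, he⟩
            rw [e1]; exact hsub _
          have := Finset.card_lt_card hss
          omega
  have hmono : ∀ k m : ℕ, k ≤ m → f^[k] A = f^[k+1] A → f^[m] A = f^[k] A := by
    intro k m hkm hfix
    induction m with
    | zero => interval_cases k; rfl
    | succ m ih =>
      rcases Nat.lt_or_ge k (m+1) with h | h
      · have hm : k ≤ m := Nat.lt_succ_iff.mp h
        have h2 := ih hm
        calc f^[m+1] A = f (f^[m] A) := Function.iterate_succ_apply' f m A
          _ = f (f^[k] A) := by rw [h2]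
          _ = f^[k+1] A := (Function.iterate_succ_apply' f k A).symm
          _ = f^[k] A := hfix.symm
      · have : k = m + 1 := le_antisymm hkm h
        rw [this]
  rcases hstep (Fintype.card V) with h | h
  · show f (f^[Fintype.card V] A) = f^[Fintype.card V] A
    calc f (f^[Fintype.card V] A) = f^[Fintype.card V + 1] A :=
          (Function.iterate_succ_apply' f (Fintype.card V) A).symm
      _ = f^[Fintype.card V] A := h.symm
  · have hcard : (f^[Fintype.card V] A).card = Fintype.card V :=
      le_antisymm (Finset.card_le_univ _) h
    have huniv : f^[Fintype.card V] A = Finset.univ := Finset.eq_univ_of_card _ hcard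
    show f (f^[Fintype.card V] A) = f^[Fintype.card V] A
    rw [huniv]
    exact bootStep_univ G r

lemma bootClosure_isClosed (A : Finset V) : IsClosedSet G (bootClosure G 2 A) :=
  (bootStep_eq_iff G _).mp (bootClosure_fixed G 2 A)

lemma subset_bootClosure (r : ℕ) (A : Finset V) : A ⊆ bootClosure G r A := by
  unfold bootClosure
  induction (Fintype.card V) with
  | zero => exact Finset.Subset.refl A
  | succ k ih =>
    rw [Function.iterate_succ_apply']
    exact ih.trans (subset_bootStep G r _)

lemma bootStep_mono (r : ℕ) {A B : Finset V} (h : A ⊆ B) :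
    bootStep G r A ⊆ bootStep G r B := by
  intro x hx
  unfold bootStep at hx ⊢
  rcases Finset.mem_union.mp hx with h1 | h1
  · exact Finset.mem_union_left _ (h h1)
  · refine Finset.mem_union_right _ ?_
    simp only [Finset.mem_filter, Finset.mem_univ, true_and] at h1 ⊢
    exact le_trans h1 (Finset.card_le_card (Finset.inter_subset_inter (Finset.Subset.refl _) h))

lemma bootClosure_minimal {r : ℕ} {A T : Finset V} (hAT : A ⊆ T)
    (hT : bootStep G r T = T) : bootClosure G r A ⊆ T := by
  unfold bootClosure
  induction (Fintype.card V) with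
  | zero => exact hAT
  | succ k ih =>
    rw [Function.iterate_succ_apply']
    calc bootStep G r ((bootStep G r)^[k] A) ⊆ bootStep G r T := bootStep_mono G r ih
    _ = T := hT

lemma mem_closed_of_two {T : Finset V} (hT : IsClosedSet G T) {x y v : V}
    (hx : x ∈ T) (hy : y ∈ T) (hxy : x ≠ y) (hvx : G.Adj v x) (hvy : G.Adj v y) :
    v ∈ T := by
  by_contra hv
  have h1 := hT v hv
  have h2 : ({x, y} : Finset V) ⊆ G.neighborFinset v ∩ T := by
    intro z hz
    rcases Finset.mem_insert.mp hz with h | h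
    · subst h; exact Finset.mem_inter.mpr ⟨(SimpleGraph.mem_neighborFinset G v z).mpr hvx, hx⟩
    · have : z = y := Finset.mem_singleton.mp h
      subst this
      exact Finset.mem_inter.mpr ⟨(SimpleGraph.mem_neighborFinset G v z).mpr hvy, hy⟩
  have := Finset.card_le_card h2
  rw [Finset.card_pair hxy] at this
  omega

lemma percolates_of_closure {A : Finset V} (h : bootClosure G 2 A = Finset.univ) :
    Percolates G 2 A := ⟨Fintype.card V, h⟩

end Infra
section Aux
variable {V : Type*} [Fintype V] (G : SimpleGraph V)

lemma exists_two_nbrs (hconn : G.Connected) (hn : 3 ≤ Fintype.card V) :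
    ∃ v a b : V, a ≠ b ∧ G.Adj v a ∧ G.Adj v b := by
  by_contra h
  push_neg at h
  have key : ∀ v a b : V, G.Adj v a → G.Adj v b → a = b := by
    intro v a b h1 h2
    by_contra hne
    exact (h v a b hne h1) h2
  have hne : Nonempty V := Fintype.card_pos_iff.mp (by omega)
  obtain ⟨x0⟩ := hne
  obtain ⟨y, hy⟩ := Fintype.exists_ne_of_one_lt_card (by omega) x0
  obtain ⟨p⟩ := hconn.preconnected x0 y
  have hadj : ∃ a b : V, G.Adj a b := by
    cases p with
    | nil => exact absurd rfl hy
    | cons h q => exact ⟨_, _, h⟩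
  obtain ⟨a, b, hab⟩ := hadj
  have hcl : ∀ u w : V, G.Adj u w → (u = a ∨ u = b) → (w = a ∨ w = b) := by
    intro u w huw hu
    rcases hu with h | h
    · rw [h] at huw; exact Or.inr (key a b w hab huw).symm
    · rw [h] at huw; exact Or.inl (key b a w hab.symm huw).symm
  have hwalk : ∀ u w : V, G.Walk u w → (u = a ∨ u = b) → (w = a ∨ w = b) := by
    intro u w p
    induction p with
    | nil => exact id
    | cons h q ih => intro hu; exact ih (hcl _ _ h hu)
  have hz : (Finset.univ \ ({a, b} : Finset V)).Nonempty := by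
    rw [← Finset.card_pos, Finset.card_sdiff_of_subset (Finset.subset_univ _), Finset.card_univ]
    have h2 : ({a, b} : Finset V).card ≤ 2 := (Finset.card_insert_le _ _).trans (by simp)
    omega
  obtain ⟨z, hzmem⟩ := hz
  simp only [Finset.mem_sdiff, Finset.mem_univ, true_and, Finset.mem_insert,
    Finset.mem_singleton] at hzmem
  push_neg at hzmem
  obtain ⟨q⟩ := hconn.preconnected a z
  rcases hwalk a z q (Or.inl rfl) with h | h
  · exact hzmem.1 h
  · exact hzmem.2 h

end Aux
theorem stmt9 {V : Type*} [Fintype V] (G : SimpleGraph V)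
    (hconn : G.Connected) (hn : 12 ≤ Fintype.card V)
    (hdeg : ∀ x y : V, x ≠ y → ¬ G.Adj x y →
      Fintype.card V - 2 ≤ G.degree x + G.degree y)
    (hm : 2 < minContagious G 2)
    (I : Finset V)
    (hIcl : ∃ A : Finset V, A.card = 2 ∧ I = bootClosure G 2 A)
    (hImax : ∀ A : Finset V, A.card = 2 → (bootClosure G 2 A).card ≤ I.card) :
    2 ≤ (I.filter (fun v => ∀ u ∈ Finset.univ \ I, ¬ G.Adj v u)).card := by
  by_contra hgoal
  push_neg at hgoal
  obtain ⟨A, hA2, hIA⟩ := hIcl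
  set W : Finset V := Finset.univ \ I with hW_def
  have hmemW : ∀ v : V, v ∈ W ↔ v ∉ I := by
    intro v; rw [hW_def]; simp
  have hIfix : bootStep G 2 I = I := by rw [hIA]; exact bootClosure_fixed G 2 A
  have hIclosed : IsClosedSet G I := (bootStep_eq_iff G I).mp hIfix
  have hM3 : ∀ w ∈ W, ((G.neighborFinset w) ∩ I).card ≤ 1 :=
    fun w hw => hIclosed w ((hmemW w).mp hw)
  have hMax : ∀ x y : V, x ≠ y → (bootClosure G 2 {x, y}).card ≤ I.card :=
    fun x y hxy => hImax {x, y} (Finset.card_pair hxy)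
  have hNoPerc : ∀ B : Finset V, B.card = 2 → ¬ Percolates G 2 B := by
    intro B hB hp
    have h2 : minContagious G 2 ≤ 2 := Nat.sInf_le ⟨B, hB, hp⟩
    omega
  have hNoUniv : ∀ x y : V, x ≠ y → bootClosure G 2 {x, y} ≠ Finset.univ := by
    intro x y hxy h
    exact hNoPerc {x, y} (Finset.card_pair hxy) (percolates_of_closure G h)
  have hWcard : I.card + W.card = Fintype.card V := by
    rw [hW_def]
    have := Finset.card_sdiff_of_subset (Finset.subset_univ I)
    rw [Finset.card_univ] at this
    have hle : I.card ≤ Fintype.card V := Finset.card_le_univ I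
    omega
  -- |I| ≥ 3
  have hI3 : 3 ≤ I.card := by
    obtain ⟨v, a, b, hab, hva, hvb⟩ := exists_two_nbrs G hconn (by omega)
    have h1 : ({a, b} : Finset V) ⊆ bootClosure G 2 {a, b} := subset_bootClosure G 2 _
    have hv : v ∈ bootClosure G 2 {a, b} :=
      mem_closed_of_two G (bootClosure_isClosed G _) (h1 (by simp)) (h1 (by simp)) hab hva hvb
    have hsub : ({v, a, b} : Finset V) ⊆ bootClosure G 2 {a, b} := by
      intro x hx
      simp only [Finset.mem_insert, Finset.mem_singleton] at hx
      rcases hx with rfl | rfl | rfl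
      · exact hv
      · exact h1 (by simp)
      · exact h1 (by simp)
    have hc3 : ({v, a, b} : Finset V).card = 3 := by
      rw [Finset.card_insert_of_notMem (by simp; exact ⟨hva.ne, hvb.ne⟩), Finset.card_pair hab]
    calc 3 = ({v, a, b} : Finset V).card := hc3.symm
      _ ≤ (bootClosure G 2 {a, b}).card := Finset.card_le_card hsub
      _ ≤ I.card := hMax a b hab
  -- the set D of vertices of I with a neighbour in W
  set D : Finset V := I.filter (fun v => ¬ ∀ u ∈ W, ¬ G.Adj v u) with hD_def
  have hDcard : I.card ≤ D.card + 1 := by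
    have := Finset.card_filter_add_card_filter_not
      (s := I) (p := fun v => ∀ u ∈ W, ¬ G.Adj v u)
    rw [← hD_def] at this
    omega
  have hDI : ∀ r ∈ D, r ∈ I := fun r hr => Finset.mem_of_mem_filter r hr
  have hDadj : ∀ r ∈ D, ∃ w, w ∈ W ∧ G.Adj r w := by
    intro r hr
    rw [hD_def] at hr
    simp only [Finset.mem_filter] at hr
    push_neg at hr
    obtain ⟨w, hw1, hw2⟩ := hr.2
    exact ⟨w, hw1, hw2⟩
  choose! wch hwchW hwchAdj using hDadj
  have hinj : ∀ r ∈ D, ∀ r' ∈ D, wch r = wch r' → r = r' := by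
    intro r hr r' hr' heq
    have h1 := hM3 (wch r) (hwchW r hr)
    rw [Finset.card_le_one] at h1
    refine h1 r ?_ r' ?_
    · exact Finset.mem_inter.mpr ⟨(SimpleGraph.mem_neighborFinset G _ _).mpr
        (hwchAdj r hr).symm, hDI r hr⟩
    · rw [heq]
      exact Finset.mem_inter.mpr ⟨(SimpleGraph.mem_neighborFinset G _ _).mpr
        (hwchAdj r' hr').symm, hDI r' hr'⟩
  have hDW : D.card ≤ W.card :=
    Finset.card_le_card_of_injOn wch (fun r hr => hwchW r hr)
      (fun r hr r' hr' h => hinj r hr r' hr' h)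
  have hWI : I.card ≤ W.card + 1 := by omega
    -- weak tight-pair bound: for any closed set T avoiding a nonadjacent pair p,q
  have M5w : ∀ T : Finset V, IsClosedSet G T → ∀ p q : V, p ∉ T → q ∉ T → p ≠ q →
      ¬ G.Adj p q →
      T.card ≤ (G.neighborFinset p ∩ G.neighborFinset q).card + 2 := by
    intro T hT p q hpT hqT hpq hnadj
    have hpqsub : ({p, q} : Finset V) ⊆ Finset.univ \ T := by
      intro x hx
      simp only [Finset.mem_insert, Finset.mem_singleton] at hx
      rcases hx with rfl | rfl <;> simp [hpT, hqT]
    have hTle : T.card + 2 ≤ Fintype.card V := by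
      have h1 := Finset.card_le_card hpqsub
      rw [Finset.card_pair hpq, Finset.card_sdiff_of_subset (Finset.subset_univ T),
        Finset.card_univ] at h1
      have h2 := Finset.card_le_univ T
      omega
    have hsd : ((Finset.univ \ T) \ ({p, q} : Finset V)).card + 2 + T.card
        = Fintype.card V := by
      rw [Finset.card_sdiff_of_subset hpqsub, Finset.card_pair hpq,
        Finset.card_sdiff_of_subset (Finset.subset_univ T), Finset.card_univ]
      omega
    have hUsub : G.neighborFinset p ∪ G.neighborFinset q ⊆
        (((Finset.univ \ T) \ ({p, q} : Finset V)) ∪ (G.neighborFinset p ∩ T)) ∪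
          (G.neighborFinset q ∩ T) := by
      intro x hx
      by_cases hxT : x ∈ T
      · rcases Finset.mem_union.mp hx with h | h
        · exact Finset.mem_union_left _
            (Finset.mem_union_right _ (Finset.mem_inter.mpr ⟨h, hxT⟩))
        · exact Finset.mem_union_right _ (Finset.mem_inter.mpr ⟨h, hxT⟩)
      · refine Finset.mem_union_left _ (Finset.mem_union_left _ ?_)
        simp only [Finset.mem_sdiff, Finset.mem_univ, true_and, Finset.mem_insert,
          Finset.mem_singleton]
        refine ⟨hxT, ?_⟩
        push_neg
        rcases Finset.mem_union.mp hx with h | h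
        · have hadj := (SimpleGraph.mem_neighborFinset G p x).mp h
          exact ⟨hadj.ne', fun he => hnadj (he ▸ hadj)⟩
        · have hadj := (SimpleGraph.mem_neighborFinset G q x).mp h
          exact ⟨fun he => hnadj (he ▸ hadj).symm, hadj.ne'⟩
    have hub : (G.neighborFinset p ∪ G.neighborFinset q).card ≤
        ((Finset.univ \ T) \ ({p, q} : Finset V)).card +
          (G.neighborFinset p ∩ T).card + (G.neighborFinset q ∩ T).card := by
      refine le_trans (Finset.card_le_card hUsub) (le_trans (Finset.card_union_le _ _) ?_)
      have := Finset.card_union_le (((Finset.univ \ T) \ ({p, q} : Finset V)))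
        (G.neighborFinset p ∩ T)
      omega
    have hpT1 := hT p hpT
    have hqT1 := hT q hqT
    have hiu := Finset.card_inter_add_card_union (G.neighborFinset p) (G.neighborFinset q)
    have hdge := hdeg p q hpq hnadj
    have hdp : G.degree p = (G.neighborFinset p).card := rfl
    have hdq : G.degree q = (G.neighborFinset q).card := rfl
    omega
  -- the full tight-pair package, when the closed set has the maximum size |I|
  have M5pack : ∀ T : Finset V, IsClosedSet G T → T.card = I.card →
      ∀ p q : V, p ∉ T → q ∉ T → p ≠ q → ¬ G.Adj p q →
      (bootClosure G 2 {p, q} = {p, q} ∪ (G.neighborFinset p ∩ G.neighborFinset q)) ∧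
      ((G.neighborFinset p ∩ G.neighborFinset q).card + 2 = I.card) ∧
      ((G.neighborFinset p ∩ G.neighborFinset q) ∩ T = ∅) ∧
      ((G.neighborFinset p ∩ T).card = 1) ∧
      ((G.neighborFinset q ∩ T).card = 1) ∧
      (G.degree p + G.degree q + 2 = Fintype.card V) ∧
      ((bootClosure G 2 {p, q}).card = I.card) := by
    intro T hT hTc p q hpT hqT hpq hnadj
    have hpqsub : ({p, q} : Finset V) ⊆ Finset.univ \ T := by
      intro x hx
      simp only [Finset.mem_insert, Finset.mem_singleton] at hx
      rcases hx with rfl | rfl <;> simp [hpT, hqT]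
    have hTle : T.card + 2 ≤ Fintype.card V := by
      have h1 := Finset.card_le_card hpqsub
      rw [Finset.card_pair hpq, Finset.card_sdiff_of_subset (Finset.subset_univ T),
        Finset.card_univ] at h1
      have h2 := Finset.card_le_univ T
      omega
    have hsd : ((Finset.univ \ T) \ ({p, q} : Finset V)).card + 2 + T.card
        = Fintype.card V := by
      rw [Finset.card_sdiff_of_subset hpqsub, Finset.card_pair hpq,
        Finset.card_sdiff_of_subset (Finset.subset_univ T), Finset.card_univ]
      omega
    have hUsub : G.neighborFinset p ∪ G.neighborFinset q ⊆
        (((Finset.univ \ T) \ ({p, q} : Finset V)) ∪ (G.neighborFinset p ∩ T)) ∪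
          (G.neighborFinset q ∩ T) := by
      intro x hx
      by_cases hxT : x ∈ T
      · rcases Finset.mem_union.mp hx with h | h
        · exact Finset.mem_union_left _
            (Finset.mem_union_right _ (Finset.mem_inter.mpr ⟨h, hxT⟩))
        · exact Finset.mem_union_right _ (Finset.mem_inter.mpr ⟨h, hxT⟩)
      · refine Finset.mem_union_left _ (Finset.mem_union_left _ ?_)
        simp only [Finset.mem_sdiff, Finset.mem_univ, true_and, Finset.mem_insert,
          Finset.mem_singleton]
        refine ⟨hxT, ?_⟩
        push_neg
        rcases Finset.mem_union.mp hx with h | h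
        · have hadj := (SimpleGraph.mem_neighborFinset G p x).mp h
          exact ⟨hadj.ne', fun he => hnadj (he ▸ hadj)⟩
        · have hadj := (SimpleGraph.mem_neighborFinset G q x).mp h
          exact ⟨fun he => hnadj (he ▸ hadj).symm, hadj.ne'⟩
    have hub : (G.neighborFinset p ∪ G.neighborFinset q).card ≤
        ((Finset.univ \ T) \ ({p, q} : Finset V)).card +
          (G.neighborFinset p ∩ T).card + (G.neighborFinset q ∩ T).card := by
      refine le_trans (Finset.card_le_card hUsub) (le_trans (Finset.card_union_le _ _) ?_)
      have := Finset.card_union_le (((Finset.univ \ T) \ ({p, q} : Finset V)))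
        (G.neighborFinset p ∩ T)
      omega
    have hpT1 := hT p hpT
    have hqT1 := hT q hqT
    have hiu := Finset.card_inter_add_card_union (G.neighborFinset p) (G.neighborFinset q)
    have hdge := hdeg p q hpq hnadj
    have hdp : G.degree p = (G.neighborFinset p).card := rfl
    have hdq : G.degree q = (G.neighborFinset q).card := rfl
    -- the closure contains p, q and all their common neighbours
    have hclsub : ({p, q} : Finset V) ∪ (G.neighborFinset p ∩ G.neighborFinset q)
        ⊆ bootClosure G 2 {p, q} := by
      apply Finset.union_subset
      · exact subset_bootClosure G 2 _
      · intro z hz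
        obtain ⟨hz1, hz2⟩ := Finset.mem_inter.mp hz
        exact mem_closed_of_two G (bootClosure_isClosed G _)
          (subset_bootClosure G 2 _ (by simp)) (subset_bootClosure G 2 _ (by simp)) hpq
          ((SimpleGraph.mem_neighborFinset G p z).mp hz1).symm
          ((SimpleGraph.mem_neighborFinset G q z).mp hz2).symm
    have hdisj : Disjoint ({p, q} : Finset V)
        (G.neighborFinset p ∩ G.neighborFinset q) := by
      rw [Finset.disjoint_left]
      intro x hx hx2
      obtain ⟨h1, h2⟩ := Finset.mem_inter.mp hx2
      simp only [Finset.mem_insert, Finset.mem_singleton] at hx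
      rcases hx with rfl | rfl
      · exact G.irrefl ((SimpleGraph.mem_neighborFinset G x x).mp h1)
      · exact hnadj ((SimpleGraph.mem_neighborFinset G p x).mp h1)
    have hcup : (({p, q} : Finset V) ∪
        (G.neighborFinset p ∩ G.neighborFinset q)).card
        = (G.neighborFinset p ∩ G.neighborFinset q).card + 2 := by
      rw [Finset.card_union_of_disjoint hdisj, Finset.card_pair hpq]
      omega
    have hclcard := Finset.card_le_card hclsub
    have hmaxpq := hMax p q hpq
    have hC2 : (G.neighborFinset p ∩ G.neighborFinset q).card + 2 = I.card := by omega
    have hC7 : G.degree p + G.degree q + 2 = Fintype.card V := by omega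
    have ha1 : (G.neighborFinset p ∩ T).card = 1 := by omega
    have hb1 : (G.neighborFinset q ∩ T).card = 1 := by omega
    have hC1 : bootClosure G 2 {p, q} = ({p, q} : Finset V) ∪
        (G.neighborFinset p ∩ G.neighborFinset q) :=
      (Finset.eq_of_subset_of_card_le hclsub (by omega)).symm
    have hC3 : (G.neighborFinset p ∩ G.neighborFinset q) ∩ T = ∅ := by
      by_contra h3
      obtain ⟨s, hs⟩ := Finset.nonempty_iff_ne_empty.mpr h3
      obtain ⟨hs1, hsT⟩ := Finset.mem_inter.mp hs
      obtain ⟨hsp, hsq⟩ := Finset.mem_inter.mp hs1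
      obtain ⟨s1, hseq1⟩ := Finset.card_eq_one.mp ha1
      obtain ⟨s2, hseq2⟩ := Finset.card_eq_one.mp hb1
      have he1 : s = s1 := by
        have : s ∈ G.neighborFinset p ∩ T := Finset.mem_inter.mpr ⟨hsp, hsT⟩
        rw [hseq1] at this; exact Finset.mem_singleton.mp this
      have he2 : s = s2 := by
        have : s ∈ G.neighborFinset q ∩ T := Finset.mem_inter.mpr ⟨hsq, hsT⟩
        rw [hseq2] at this; exact Finset.mem_singleton.mp this
      have hUsub2 : G.neighborFinset p ∪ G.neighborFinset q ⊆
          ((Finset.univ \ T) \ ({p, q} : Finset V)) ∪ {s} := by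
        intro x hx
        by_cases hxT : x ∈ T
        · refine Finset.mem_union_right _ ?_
          rcases Finset.mem_union.mp hx with h | h
          · have : x ∈ G.neighborFinset p ∩ T := Finset.mem_inter.mpr ⟨h, hxT⟩
            rw [hseq1] at this
            simp only [Finset.mem_singleton] at this ⊢
            rw [this, ← he1]
          · have : x ∈ G.neighborFinset q ∩ T := Finset.mem_inter.mpr ⟨h, hxT⟩
            rw [hseq2] at this
            simp only [Finset.mem_singleton] at this ⊢
            rw [this, ← he2]
        · refine Finset.mem_union_left _ ?_
          simp only [Finset.mem_sdiff, Finset.mem_univ, true_and, Finset.mem_insert,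
            Finset.mem_singleton]
          refine ⟨hxT, ?_⟩
          push_neg
          rcases Finset.mem_union.mp hx with h | h
          · have hadj := (SimpleGraph.mem_neighborFinset G p x).mp h
            exact ⟨hadj.ne', fun he => hnadj (he ▸ hadj)⟩
          · have hadj := (SimpleGraph.mem_neighborFinset G q x).mp h
            exact ⟨fun he => hnadj (he ▸ hadj).symm, hadj.ne'⟩
      have hub2 : (G.neighborFinset p ∪ G.neighborFinset q).card ≤
          ((Finset.univ \ T) \ ({p, q} : Finset V)).card + 1 := by
        refine le_trans (Finset.card_le_card hUsub2) ?_
        have := Finset.card_union_le (((Finset.univ \ T) \ ({p, q} : Finset V)))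
          ({s} : Finset V)
        simp only [Finset.card_singleton] at this
        omega
      omega
    have hC8 : (bootClosure G 2 {p, q}).card = I.card := by omega
    exact ⟨hC1, hC2, hC3, ha1, hb1, hC7, hC8⟩
    -- two W-neighbours of a vertex of I are adjacent
  have hKp : ∀ p ∈ I, ∀ w w' : V, w ∈ W → w' ∈ W → G.Adj p w → G.Adj p w' →
      w ≠ w' → G.Adj w w' := by
    intro p hp w w' hw hw' ha1 ha2 hne
    by_contra hna
    obtain ⟨_, _, hC3, _, _, _, _⟩ := M5pack I hIclosed rfl w w' ((hmemW w).mp hw)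
      ((hmemW w').mp hw') hne hna
    have hmem : p ∈ (G.neighborFinset w ∩ G.neighborFinset w') ∩ I :=
      Finset.mem_inter.mpr ⟨Finset.mem_inter.mpr
        ⟨(SimpleGraph.mem_neighborFinset G w p).mpr ha1.symm,
         (SimpleGraph.mem_neighborFinset G w' p).mpr ha2.symm⟩, hp⟩
    rw [hC3] at hmem
    exact absurd hmem (Finset.notMem_empty p)
  -- branch A: a closed set S of size |I| disjoint from I leads to a contradiction
  have brA : ∀ S : Finset V, IsClosedSet G S → S.card = I.card →
      (∀ x ∈ S, x ∉ I) → False := by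
    intro S hS hScard hSI
    have hIS : ∀ x ∈ I, x ∉ S := fun x hx hxS => hSI x hxS hx
    -- complement of G[I] has max degree ≤ 1
    have hcomp : ∀ p ∈ I, ∀ q ∈ I, ∀ q' ∈ I, p ≠ q → p ≠ q' → q ≠ q' →
        ¬ G.Adj p q → ¬ G.Adj p q' → False := by
      intro p hp q hq q' hq' hpq hpq' hqq' hn1 hn2
      obtain ⟨hC1, hC2, _, _, _, _, hC8⟩ :=
        M5pack S hS hScard p q (hIS p hp) (hIS q hq) hpq hn1
      have hsub : bootClosure G 2 {p, q} ⊆ I := by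
        refine bootClosure_minimal G ?_ hIfix
        intro x hx
        simp only [Finset.mem_insert, Finset.mem_singleton] at hx
        rcases hx with rfl | rfl
        · exact hp
        · exact hq
      have heq : bootClosure G 2 {p, q} = I :=
        Finset.eq_of_subset_of_card_le hsub (le_of_eq hC8.symm)
      have hq'mem : q' ∈ bootClosure G 2 {p, q} := heq.symm ▸ hq'
      rw [hC1] at hq'mem
      rcases Finset.mem_union.mp hq'mem with h | h
      · simp only [Finset.mem_insert, Finset.mem_singleton] at h
        rcases h with rfl | rfl
        · exact hpq' rfl
        · exact hqq' rfl
      · exact hn2 ((SimpleGraph.mem_neighborFinset G p q').mp (Finset.mem_inter.mp h).1)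
    -- nonneighbourhood of any vertex of I inside I has ≤ 1 element
    have hnn : ∀ p ∈ I, (I.filter (fun z => z ≠ p ∧ ¬ G.Adj p z)).card ≤ 1 := by
      intro p hp
      rw [Finset.card_le_one]
      intro a ha b hb
      simp only [Finset.mem_filter] at ha hb
      by_contra hab
      exact hcomp p hp a ha.1 b hb.1 (Ne.symm ha.2.1) (Ne.symm hb.2.1) hab ha.2.2 hb.2.2
    -- pick a vertex of I with a neighbour in W
    have hDne : D.Nonempty := Finset.card_pos.mp (by omega)
    obtain ⟨r1, hr1D⟩ := hDne
    have hr1I : r1 ∈ I := hDI r1 hr1D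
    have hw1W : wch r1 ∈ W := hwchW r1 hr1D
    have hw1adj : G.Adj r1 (wch r1) := hwchAdj r1 hr1D
    have hw1I : wch r1 ∉ I := (hmemW (wch r1)).mp hw1W
    by_cases hHT : ∃ r2 ∈ I, ∃ r3 ∈ I, r1 ≠ r2 ∧ r1 ≠ r3 ∧ r2 ≠ r3 ∧
        G.Adj r1 r2 ∧ G.Adj r1 r3 ∧ G.Adj r2 r3
    · -- a triangle through r1 floods all of I, plus wch r1 : contradiction
      obtain ⟨r2, hr2, r3, hr3, h12, h13, h23, a12, a13, a23⟩ := hHT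
      have hFclosed : IsClosedSet G (bootClosure G 2 {wch r1, r2}) :=
        bootClosure_isClosed G _
      have hw1r2 : wch r1 ≠ r2 := fun h => hw1I (h ▸ hr2)
      have hw1F : wch r1 ∈ bootClosure G 2 {wch r1, r2} :=
        subset_bootClosure G 2 _ (by simp)
      have hr2F : r2 ∈ bootClosure G 2 {wch r1, r2} :=
        subset_bootClosure G 2 _ (by simp)
      have hr1F : r1 ∈ bootClosure G 2 {wch r1, r2} :=
        mem_closed_of_two G hFclosed hw1F hr2F hw1r2 hw1adj a12
      have hr3F : r3 ∈ bootClosure G 2 {wch r1, r2} :=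
        mem_closed_of_two G hFclosed hr1F hr2F h12 a13.symm a23.symm
      have hIF : ∀ z ∈ I, z ∈ bootClosure G 2 {wch r1, r2} := by
        intro z hz
        by_cases hz1 : z = r1
        · exact hz1 ▸ hr1F
        by_cases hz2 : z = r2
        · exact hz2 ▸ hr2F
        by_cases hz3 : z = r3
        · exact hz3 ▸ hr3F
        by_cases hzr1 : G.Adj z r1
        · by_cases hzr2 : G.Adj z r2
          · exact mem_closed_of_two G hFclosed hr1F hr2F h12 hzr1 hzr2
          · by_cases hzr3 : G.Adj z r3
            · exact mem_closed_of_two G hFclosed hr1F hr3F h13 hzr1 hzr3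
            · exact (hcomp z hz r2 hr2 r3 hr3 hz2 hz3 h23 hzr2 hzr3).elim
        · by_cases hzr2 : G.Adj z r2
          · by_cases hzr3 : G.Adj z r3
            · exact mem_closed_of_two G hFclosed hr2F hr3F h23 hzr2 hzr3
            · exact (hcomp z hz r1 hr1I r3 hr3 hz1 hz3 h13 hzr1 hzr3).elim
          · exact (hcomp z hz r1 hr1I r2 hr2 hz1 hz2 h12 hzr1 hzr2).elim
      have hsubF : insert (wch r1) I ⊆ bootClosure G 2 {wch r1, r2} := by
        intro x hx
        rcases Finset.mem_insert.mp hx with rfl | hxI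
        · exact hw1F
        · exact hIF x hxI
      have hcard1 : (insert (wch r1) I).card = I.card + 1 :=
        Finset.card_insert_of_notMem hw1I
      have hcard2 := Finset.card_le_card hsubF
      have hcard3 := hMax (wch r1) r2 hw1r2
      omega
    · -- no triangle through r1 : then |I| ≤ 4
      have hI4 : I.card ≤ 4 := by
        by_contra hbig
        push_neg at hbig
        have hB1 : I.card ≤ 2 + (I.filter (fun z => z ≠ r1 ∧ G.Adj r1 z)).card := by
          have hsub : I ⊆ insert r1 ((I.filter (fun z => z ≠ r1 ∧ ¬ G.Adj r1 z)) ∪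
              (I.filter (fun z => z ≠ r1 ∧ G.Adj r1 z))) := by
            intro z hz
            by_cases h1 : z = r1
            · simp [h1]
            by_cases h2 : G.Adj r1 z
            · refine Finset.mem_insert_of_mem (Finset.mem_union_right _ ?_)
              simp [Finset.mem_filter, hz, h1, h2]
            · refine Finset.mem_insert_of_mem (Finset.mem_union_left _ ?_)
              simp [Finset.mem_filter, hz, h1, h2]
          have h1 := Finset.card_le_card hsub
          have h2 := Finset.card_insert_le r1 ((I.filter (fun z => z ≠ r1 ∧ ¬ G.Adj r1 z)) ∪
              (I.filter (fun z => z ≠ r1 ∧ G.Adj r1 z)))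
          have h3 := Finset.card_union_le (I.filter (fun z => z ≠ r1 ∧ ¬ G.Adj r1 z))
              (I.filter (fun z => z ≠ r1 ∧ G.Adj r1 z))
          have h4 := hnn r1 hr1I
          omega
        have hB1ne : 3 ≤ (I.filter (fun z => z ≠ r1 ∧ G.Adj r1 z)).card := by omega
        obtain ⟨r2, hr2B⟩ := Finset.card_pos.mp (by omega :
          0 < (I.filter (fun z => z ≠ r1 ∧ G.Adj r1 z)).card)
        simp only [Finset.mem_filter] at hr2B
        obtain ⟨hr2I, hr2ne, hr2adj⟩ := hr2B
        -- now find r3 adjacent to both r1 and r2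
        have hB2 : (I.filter (fun z => z ≠ r1 ∧ G.Adj r1 z)).card ≤ 2 +
            ((I.filter (fun z => z ≠ r1 ∧ G.Adj r1 z)).filter
              (fun z => z ≠ r2 ∧ G.Adj r2 z)).card := by
          have hsub : (I.filter (fun z => z ≠ r1 ∧ G.Adj r1 z)) ⊆ insert r2
              ((I.filter (fun z => z ≠ r2 ∧ ¬ G.Adj r2 z)) ∪
               ((I.filter (fun z => z ≠ r1 ∧ G.Adj r1 z)).filter
                 (fun z => z ≠ r2 ∧ G.Adj r2 z))) := by
            intro z hz
            have hzI : z ∈ I := Finset.mem_of_mem_filter z hz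
            by_cases h1 : z = r2
            · simp [h1]
            by_cases h2 : G.Adj r2 z
            · refine Finset.mem_insert_of_mem (Finset.mem_union_right _ ?_)
              simp only [Finset.mem_filter]
              exact ⟨(Finset.mem_filter.mp hz), h1, h2⟩
            · refine Finset.mem_insert_of_mem (Finset.mem_union_left _ ?_)
              simp [Finset.mem_filter, hzI, h1, h2]
          have h1 := Finset.card_le_card hsub
          have h2 := Finset.card_insert_le r2 ((I.filter (fun z => z ≠ r2 ∧ ¬ G.Adj r2 z)) ∪
               ((I.filter (fun z => z ≠ r1 ∧ G.Adj r1 z)).filter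
                 (fun z => z ≠ r2 ∧ G.Adj r2 z)))
          have h3 := Finset.card_union_le (I.filter (fun z => z ≠ r2 ∧ ¬ G.Adj r2 z))
               ((I.filter (fun z => z ≠ r1 ∧ G.Adj r1 z)).filter
                 (fun z => z ≠ r2 ∧ G.Adj r2 z))
          have h4 := hnn r2 hr2I
          omega
        obtain ⟨r3, hr3B⟩ := Finset.card_pos.mp (by omega :
          0 < ((I.filter (fun z => z ≠ r1 ∧ G.Adj r1 z)).filter
            (fun z => z ≠ r2 ∧ G.Adj r2 z)).card)
        simp only [Finset.mem_filter] at hr3B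
        obtain ⟨⟨hr3I, hr3ne1, hr3adj1⟩, hr3ne2, hr3adj2⟩ := hr3B
        exact hHT ⟨r2, hr2I, r3, hr3I, Ne.symm hr2ne, Ne.symm hr3ne1, Ne.symm hr3ne2,
          hr2adj, hr3adj1, hr3adj2⟩
      -- ≤ |I|-1 W-neighbours for any vertex of I
      have hdegsplit : ∀ p : V, G.degree p =
          (G.neighborFinset p ∩ I).card + (G.neighborFinset p ∩ W).card := by
        intro p
        have hdisj : Disjoint (G.neighborFinset p ∩ I) (G.neighborFinset p ∩ W) := by
          rw [Finset.disjoint_left]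
          intro x hx hx'
          exact ((hmemW x).mp (Finset.mem_inter.mp hx').2) (Finset.mem_inter.mp hx).2
        have hcover : G.neighborFinset p =
            (G.neighborFinset p ∩ I) ∪ (G.neighborFinset p ∩ W) := by
          ext x
          constructor
          · intro hx
            by_cases hxI : x ∈ I
            · exact Finset.mem_union_left _ (Finset.mem_inter.mpr ⟨hx, hxI⟩)
            · exact Finset.mem_union_right _
                (Finset.mem_inter.mpr ⟨hx, (hmemW x).mpr hxI⟩)
          · intro hx
            rcases Finset.mem_union.mp hx with h | h
            · exact (Finset.mem_inter.mp h).1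
            · exact (Finset.mem_inter.mp h).1
        have h0 : G.degree p = (G.neighborFinset p).card := rfl
        rw [h0]
        nth_rewrite 1 [hcover]
        rw [Finset.card_union_of_disjoint hdisj]
      have hKcard : ∀ p ∈ I, (G.neighborFinset p ∩ W).card + 1 ≤ I.card := by
        intro p hp
        by_contra hc
        push_neg at hc
        obtain ⟨w, hw, w', hw', hww⟩ := Finset.one_lt_card.mp
          (by omega : 1 < (G.neighborFinset p ∩ W).card)
        obtain ⟨hwN, hwW⟩ := Finset.mem_inter.mp hw
        obtain ⟨hw'N, hw'W⟩ := Finset.mem_inter.mp hw'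
        have hpw : G.Adj p w := (SimpleGraph.mem_neighborFinset G p w).mp hwN
        have hpw' : G.Adj p w' := (SimpleGraph.mem_neighborFinset G p w').mp hw'N
        have hwF : w ∈ bootClosure G 2 {w, w'} := subset_bootClosure G 2 _ (by simp)
        have hw'F : w' ∈ bootClosure G 2 {w, w'} := subset_bootClosure G 2 _ (by simp)
        have hsub : insert p (G.neighborFinset p ∩ W) ⊆ bootClosure G 2 {w, w'} := by
          intro x hx
          rcases Finset.mem_insert.mp hx with rfl | hx2
          · exact mem_closed_of_two G (bootClosure_isClosed G _) hwF hw'F hww hpw hpw'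
          · obtain ⟨hxN, hxW⟩ := Finset.mem_inter.mp hx2
            have hpx : G.Adj p x := (SimpleGraph.mem_neighborFinset G p x).mp hxN
            by_cases h1 : x = w
            · exact h1 ▸ hwF
            by_cases h2 : x = w'
            · exact h2 ▸ hw'F
            exact mem_closed_of_two G (bootClosure_isClosed G _) hwF hw'F hww
              (hKp p hp w x hwW hxW hpw hpx (Ne.symm h1)).symm
              (hKp p hp w' x hw'W hxW hpw' hpx (Ne.symm h2)).symm
        have hpnot : p ∉ G.neighborFinset p ∩ W := by
          intro h
          exact G.irrefl ((SimpleGraph.mem_neighborFinset G p p).mp (Finset.mem_inter.mp h).1)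
        have hc1 : (insert p (G.neighborFinset p ∩ W)).card =
            (G.neighborFinset p ∩ W).card + 1 := Finset.card_insert_of_notMem hpnot
        have hc2 := Finset.card_le_card hsub
        have hc3 := hMax w w' hww
        omega
      rcases (by omega : I.card = 3 ∨ I.card = 4) with h3 | h4
      · -- |I| = 3 : the configuration is a path p - c - q
        have hP3 : ∃ p q c : V, p ∈ I ∧ q ∈ I ∧ c ∈ I ∧ p ≠ q ∧ p ≠ c ∧ q ≠ c ∧
            ¬ G.Adj p q ∧ G.Adj c p ∧ G.Adj c q := by
          have hr1sub : ({r1} : Finset V) ⊆ I := by simp [hr1I]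
          have hcd : (I \ {r1}).card = 2 := by
            rw [Finset.card_sdiff_of_subset hr1sub]
            simp
            omega
          obtain ⟨x, y, hxy, hexy⟩ := Finset.card_eq_two.mp hcd
          have hx' : x ∈ I \ {r1} := by rw [hexy]; simp
          have hy' : y ∈ I \ {r1} := by rw [hexy]; simp
          have hxI : x ∈ I := (Finset.mem_sdiff.mp hx').1
          have hyI : y ∈ I := (Finset.mem_sdiff.mp hy').1
          have hxr1 : x ≠ r1 := by
            have := (Finset.mem_sdiff.mp hx').2; simpa using this
          have hyr1 : y ≠ r1 := by
            have := (Finset.mem_sdiff.mp hy').2; simpa using this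
          by_cases ha1 : G.Adj r1 x
          · by_cases ha2 : G.Adj r1 y
            · have hna : ¬ G.Adj x y := fun h => hHT ⟨x, hxI, y, hyI, Ne.symm hxr1,
                Ne.symm hyr1, hxy, ha1, ha2, h⟩
              exact ⟨x, y, r1, hxI, hyI, hr1I, hxy, hxr1, hyr1, hna, ha1, ha2⟩
            · have hxy_adj : G.Adj x y := by
                by_contra hna
                exact hcomp y hyI r1 hr1I x hxI hyr1 (Ne.symm hxy) (Ne.symm hxr1)
                  (fun h => ha2 h.symm) (fun h => hna h.symm)
              exact ⟨r1, y, x, hr1I, hyI, hxI, Ne.symm hyr1, Ne.symm hxr1, Ne.symm hxy,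
                ha2, ha1.symm, hxy_adj⟩
          · have hy_adj : G.Adj r1 y := by
              by_contra h2
              exact hcomp r1 hr1I x hxI y hyI (Ne.symm hxr1) (Ne.symm hyr1) hxy ha1 h2
            have hxy_adj : G.Adj x y := by
              by_contra hna
              exact hcomp x hxI r1 hr1I y hyI hxr1 hxy (Ne.symm hyr1)
                (fun h => ha1 h.symm) hna
            exact ⟨r1, x, y, hr1I, hxI, hyI, Ne.symm hxr1, Ne.symm hyr1, hxy,
              ha1, hy_adj.symm, hxy_adj.symm⟩
        obtain ⟨p, q, c, hpI, hqI, hcI, hpq, hpc, hqc, hnadj, hcp, hcq⟩ := hP3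
        have hIeq : I = {p, q, c} := by
          symm
          apply Finset.eq_of_subset_of_card_le
          · intro t ht
            simp only [Finset.mem_insert, Finset.mem_singleton] at ht
            rcases ht with rfl | rfl | rfl
            exacts [hpI, hqI, hcI]
          · have : ({p, q, c} : Finset V).card = 3 := by
              rw [Finset.card_insert_of_notMem (by simp [hpq, hpc]),
                Finset.card_insert_of_notMem (by simp [hqc]), Finset.card_singleton]
            omega
        have hNI : ∀ z : V, z ∈ I → (∀ t ∈ I, G.Adj z t → t = c) →
            (G.neighborFinset z ∩ I).card ≤ 1 := by
          intro z _ hzc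
          have : G.neighborFinset z ∩ I ⊆ {c} := by
            intro t ht
            obtain ⟨ht1, ht2⟩ := Finset.mem_inter.mp ht
            simp only [Finset.mem_singleton]
            exact hzc t ht2 ((SimpleGraph.mem_neighborFinset G z t).mp ht1)
          have := Finset.card_le_card this
          simpa using this
        have hdp : G.degree p ≤ 3 := by
          have h1 := hdegsplit p
          have h2 : (G.neighborFinset p ∩ I).card ≤ 1 := by
            refine hNI p hpI ?_
            intro t htI hadj
            rw [hIeq] at htI
            simp only [Finset.mem_insert, Finset.mem_singleton] at htI
            rcases htI with rfl | rfl | rfl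
            · exact absurd hadj (G.irrefl)
            · exact absurd hadj hnadj
            · rfl
          have h3 := hKcard p hpI
          omega
        have hdq : G.degree q ≤ 3 := by
          have h1 := hdegsplit q
          have h2 : (G.neighborFinset q ∩ I).card ≤ 1 := by
            refine hNI q hqI ?_
            intro t htI hadj
            rw [hIeq] at htI
            simp only [Finset.mem_insert, Finset.mem_singleton] at htI
            rcases htI with rfl | rfl | rfl
            · exact absurd hadj (fun h => hnadj h.symm)
            · exact absurd hadj (G.irrefl)
            · rfl
          have h3 := hKcard q hqI
          omega
        obtain ⟨_, _, _, _, _, hC7, _⟩ :=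
          M5pack S hS hScard p q (hIS p hpI) (hIS q hqI) hpq hnadj
        omega
      · -- |I| = 4 : the configuration is a 4-cycle
        -- r1 has at least two neighbours in I
        have hB1 : 2 ≤ (I.filter (fun z => z ≠ r1 ∧ G.Adj r1 z)).card := by
          have hsub : I ⊆ insert r1 ((I.filter (fun z => z ≠ r1 ∧ ¬ G.Adj r1 z)) ∪
              (I.filter (fun z => z ≠ r1 ∧ G.Adj r1 z))) := by
            intro z hz
            by_cases h1 : z = r1
            · simp [h1]
            by_cases h2 : G.Adj r1 z
            · refine Finset.mem_insert_of_mem (Finset.mem_union_right _ ?_)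
              simp [Finset.mem_filter, hz, h1, h2]
            · refine Finset.mem_insert_of_mem (Finset.mem_union_left _ ?_)
              simp [Finset.mem_filter, hz, h1, h2]
          have hc1 := Finset.card_le_card hsub
          have hc2 := Finset.card_insert_le r1 ((I.filter (fun z => z ≠ r1 ∧ ¬ G.Adj r1 z)) ∪
              (I.filter (fun z => z ≠ r1 ∧ G.Adj r1 z)))
          have hc3 := Finset.card_union_le (I.filter (fun z => z ≠ r1 ∧ ¬ G.Adj r1 z))
              (I.filter (fun z => z ≠ r1 ∧ G.Adj r1 z))
          have hc4 := hnn r1 hr1I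
          omega
        obtain ⟨x, hxB, y, hyB, hxy⟩ := Finset.one_lt_card.mp
          (by omega : 1 < (I.filter (fun z => z ≠ r1 ∧ G.Adj r1 z)).card)
        simp only [Finset.mem_filter] at hxB hyB
        obtain ⟨hxI, hxr1, hax⟩ := hxB
        obtain ⟨hyI, hyr1, hay⟩ := hyB
        have hnxy : ¬ G.Adj x y :=
          fun h => hHT ⟨x, hxI, y, hyI, Ne.symm hxr1, Ne.symm hyr1, hxy, hax, hay, h⟩
        -- the fourth vertex z
        have htriple : ({r1, x, y} : Finset V) ⊆ I := by
          intro t ht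
          simp only [Finset.mem_insert, Finset.mem_singleton] at ht
          rcases ht with rfl | rfl | rfl
          exacts [hr1I, hxI, hyI]
        have htc : ({r1, x, y} : Finset V).card = 3 := by
          rw [Finset.card_insert_of_notMem (by simp [Ne.symm hxr1, Ne.symm hyr1]),
            Finset.card_pair hxy]
        have hz4 : (I \ ({r1, x, y} : Finset V)).card = 1 := by
          rw [Finset.card_sdiff_of_subset htriple, htc, h4]
        obtain ⟨z, hzeq⟩ := Finset.card_eq_one.mp hz4
        have hzmem : z ∈ I \ ({r1, x, y} : Finset V) := by rw [hzeq]; simp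
        have hzI : z ∈ I := (Finset.mem_sdiff.mp hzmem).1
        have hznot := (Finset.mem_sdiff.mp hzmem).2
        simp only [Finset.mem_insert, Finset.mem_singleton] at hznot
        push_neg at hznot
        obtain ⟨hzr1, hzx, hzy⟩ := hznot
        have haxz : G.Adj x z := by
          by_contra h
          exact hcomp x hxI y hyI z hzI hxy (Ne.symm hzx) (Ne.symm hzy) hnxy h
        have hayz : G.Adj y z := by
          by_contra h
          exact hcomp y hyI x hxI z hzI (Ne.symm hxy) (Ne.symm hzy)
            (fun he => hzx he.symm) (fun he => hnxy he.symm) h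
        have hnr1z : ¬ G.Adj r1 z := by
          intro h
          exact hHT ⟨x, hxI, z, hzI, Ne.symm hxr1, Ne.symm hzr1, fun he => hzx he.symm,
            hax, h, haxz⟩
        have hIeq : I = {r1, z, x, y} := by
          symm
          apply Finset.eq_of_subset_of_card_le
          · intro t ht
            simp only [Finset.mem_insert, Finset.mem_singleton] at ht
            rcases ht with rfl | rfl | rfl | rfl
            exacts [hr1I, hzI, hxI, hyI]
          · have hc : ({r1, z, x, y} : Finset V).card = 4 := by
              rw [Finset.card_insert_of_notMem
                  (by simp [Ne.symm hzr1, Ne.symm hxr1, Ne.symm hyr1]),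
                Finset.card_insert_of_notMem (by simp [hzx, hzy]),
                Finset.card_pair hxy]
            omega
        obtain ⟨_, _, _, hS1r1, hS1z, hC7a, _⟩ := M5pack S hS hScard r1 z (hIS r1 hr1I)
          (hIS z hzI) (Ne.symm hzr1) hnr1z
        obtain ⟨_, _, _, hS1x, hS1y, hC7b, _⟩ := M5pack S hS hScard x y (hIS x hxI)
          (hIS y hyI) hxy hnxy
        -- neighbourhoods inside I
        have hNr1I : G.neighborFinset r1 ∩ I = {x, y} := by
          ext t
          simp only [Finset.mem_inter, SimpleGraph.mem_neighborFinset, Finset.mem_insert,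
            Finset.mem_singleton]
          constructor
          · rintro ⟨hadj, htI⟩
            rw [hIeq] at htI
            simp only [Finset.mem_insert, Finset.mem_singleton] at htI
            rcases htI with rfl | rfl | rfl | rfl
            · exact absurd hadj (G.irrefl)
            · exact absurd hadj hnr1z
            · exact Or.inl rfl
            · exact Or.inr rfl
          · rintro (rfl | rfl)
            · exact ⟨hax, hxI⟩
            · exact ⟨hay, hyI⟩
        have hNzI : G.neighborFinset z ∩ I = {x, y} := by
          ext t
          simp only [Finset.mem_inter, SimpleGraph.mem_neighborFinset, Finset.mem_insert,
            Finset.mem_singleton]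
          constructor
          · rintro ⟨hadj, htI⟩
            rw [hIeq] at htI
            simp only [Finset.mem_insert, Finset.mem_singleton] at htI
            rcases htI with rfl | rfl | rfl | rfl
            · exact absurd hadj (fun h => hnr1z h.symm)
            · exact absurd hadj (G.irrefl)
            · exact Or.inl rfl
            · exact Or.inr rfl
          · rintro (rfl | rfl)
            · exact ⟨haxz.symm, hxI⟩
            · exact ⟨hayz.symm, hyI⟩
        have hpairc : ({x, y} : Finset V).card = 2 := Finset.card_pair hxy
        have hdr1 : G.degree r1 = 2 + (G.neighborFinset r1 ∩ W).card := by
          have := hdegsplit r1; rw [hNr1I, hpairc] at this; omega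
        have hdz : G.degree z = 2 + (G.neighborFinset z ∩ W).card := by
          have := hdegsplit z; rw [hNzI, hpairc] at this; omega
        have hKr1le := hKcard r1 hr1I
        have hKzle := hKcard z hzI
        have hKr1c : (G.neighborFinset r1 ∩ W).card = 3 := by omega
        have hKzc : (G.neighborFinset z ∩ W).card = 3 := by omega
        have hn12 : Fintype.card V = 12 := by omega
        -- the sets {p0} ∪ (N p0 ∩ W) are closed, for p0 = r1, z
        have hTp : ∀ p0 ∈ I, (G.neighborFinset p0 ∩ W).card = 3 →
            IsClosedSet G (insert p0 (G.neighborFinset p0 ∩ W)) := by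
          intro p0 hp0 hK3
          obtain ⟨w, w', w'', hww', hww'', hw'w'', hKeq⟩ := Finset.card_eq_three.mp hK3
          have hwmem : w ∈ G.neighborFinset p0 ∩ W := by rw [hKeq]; simp
          have hw'mem : w' ∈ G.neighborFinset p0 ∩ W := by rw [hKeq]; simp
          have hw''mem : w'' ∈ G.neighborFinset p0 ∩ W := by rw [hKeq]; simp
          obtain ⟨hwN, hwW⟩ := Finset.mem_inter.mp hwmem
          obtain ⟨hw'N, hw'W⟩ := Finset.mem_inter.mp hw'mem
          obtain ⟨hw''N, hw''W⟩ := Finset.mem_inter.mp hw''mem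
          have hpw : G.Adj p0 w := (SimpleGraph.mem_neighborFinset G p0 w).mp hwN
          have hpw' : G.Adj p0 w' := (SimpleGraph.mem_neighborFinset G p0 w').mp hw'N
          have hpw'' : G.Adj p0 w'' := (SimpleGraph.mem_neighborFinset G p0 w'').mp hw''N
          have hwF : w ∈ bootClosure G 2 {w, w'} := subset_bootClosure G 2 _ (by simp)
          have hw'F : w' ∈ bootClosure G 2 {w, w'} := subset_bootClosure G 2 _ (by simp)
          have hsub : insert p0 (G.neighborFinset p0 ∩ W) ⊆ bootClosure G 2 {w, w'} := by
            intro t ht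
            rcases Finset.mem_insert.mp ht with rfl | ht2
            · exact mem_closed_of_two G (bootClosure_isClosed G _) hwF hw'F hww' hpw hpw'
            · rw [hKeq] at ht2
              simp only [Finset.mem_insert, Finset.mem_singleton] at ht2
              rcases ht2 with rfl | rfl | rfl
              · exact hwF
              · exact hw'F
              · exact mem_closed_of_two G (bootClosure_isClosed G _) hwF hw'F hww'
                  (hKp p0 hp0 w t hwW hw''W hpw hpw'' hww'').symm
                  (hKp p0 hp0 w' t hw'W hw''W hpw' hpw'' hw'w'').symm
          have hpnot : p0 ∉ G.neighborFinset p0 ∩ W := by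
            intro h
            exact G.irrefl ((SimpleGraph.mem_neighborFinset G p0 p0).mp
              (Finset.mem_inter.mp h).1)
          have hc1 : (insert p0 (G.neighborFinset p0 ∩ W)).card = 4 := by
            rw [Finset.card_insert_of_notMem hpnot, hK3]
          have heq : insert p0 (G.neighborFinset p0 ∩ W) = bootClosure G 2 {w, w'} := by
            apply Finset.eq_of_subset_of_card_le hsub
            have := hMax w w' hww'
            omega
          rw [heq]
          exact bootClosure_isClosed G _
        have hTr1 := hTp r1 hr1I hKr1c
        have hTz := hTp z hzI hKzc
        -- x, y are not adjacent to any W-neighbour of r1 or z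
        have hnadjK : ∀ p0 t : V, p0 ∈ I → t ∈ I → t ≠ p0 → G.Adj t p0 →
            IsClosedSet G (insert p0 (G.neighborFinset p0 ∩ W)) →
            ∀ u, u ∈ G.neighborFinset p0 ∩ W → ¬ G.Adj t u := by
          intro p0 t hp0 htI htp0 hadj hcl u hu hadj2
          have htW : u ∈ W := (Finset.mem_inter.mp hu).2
          have htnotmem : t ∉ insert p0 (G.neighborFinset p0 ∩ W) := by
            intro h
            rcases Finset.mem_insert.mp h with h1 | h1
            · exact htp0 h1
            · exact ((hmemW t).mp (Finset.mem_inter.mp h1).2) htI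
          have hp0u : p0 ≠ u := fun h => ((hmemW u).mp htW) (h ▸ hp0)
          exact htnotmem (mem_closed_of_two G hcl (Finset.mem_insert_self _ _)
            (Finset.mem_insert_of_mem hu) hp0u hadj hadj2)
        have hxK1 := hnadjK r1 x hr1I hxI hxr1 hax.symm hTr1
        have hxK2 := hnadjK z x hzI hxI (fun h => hzx h.symm) haxz hTz
        have hyK1 := hnadjK r1 y hr1I hyI hyr1 hay.symm hTr1
        have hyK2 := hnadjK z y hzI hyI (fun h => hzy h.symm) hayz hTz
        -- the set X = V \ I \ S has 4 elements and equals the W-neighbours of r1 and z off S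
        have hS_sub : S ⊆ Finset.univ \ I :=
          fun s hs => Finset.mem_sdiff.mpr ⟨Finset.mem_univ s, hSI s hs⟩
        have hXcard : ((Finset.univ \ I) \ S).card = 4 := by
          rw [Finset.card_sdiff_of_subset hS_sub, Finset.card_sdiff_of_subset (Finset.subset_univ I),
            Finset.card_univ, hScard, hn12, h4]
        have hK1S : ((G.neighborFinset r1 ∩ W) ∩ S).card ≤ 1 := by
          refine le_trans (Finset.card_le_card ?_) (le_of_eq hS1r1)
          intro t ht
          exact Finset.mem_inter.mpr ⟨(Finset.mem_inter.mp (Finset.mem_inter.mp ht).1).1,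
            (Finset.mem_inter.mp ht).2⟩
        have hK2S : ((G.neighborFinset z ∩ W) ∩ S).card ≤ 1 := by
          refine le_trans (Finset.card_le_card ?_) (le_of_eq hS1z)
          intro t ht
          exact Finset.mem_inter.mpr ⟨(Finset.mem_inter.mp (Finset.mem_inter.mp ht).1).1,
            (Finset.mem_inter.mp ht).2⟩
        have hK1sd : 2 ≤ ((G.neighborFinset r1 ∩ W) \ S).card := by
          have := Finset.card_sdiff_add_card_inter (G.neighborFinset r1 ∩ W) S
          omega
        have hK2sd : 2 ≤ ((G.neighborFinset z ∩ W) \ S).card := by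
          have := Finset.card_sdiff_add_card_inter (G.neighborFinset z ∩ W) S
          omega
        have hdisjK : Disjoint ((G.neighborFinset r1 ∩ W) \ S)
            ((G.neighborFinset z ∩ W) \ S) := by
          rw [Finset.disjoint_left]
          intro t ht ht'
          have h1 := Finset.mem_inter.mp (Finset.mem_sdiff.mp ht).1
          have h2 := Finset.mem_inter.mp (Finset.mem_sdiff.mp ht').1
          have htW : t ∈ W := h1.2
          have := hM3 t htW
          have hsub2 : ({r1, z} : Finset V) ⊆ G.neighborFinset t ∩ I := by
            intro s hs
            simp only [Finset.mem_insert, Finset.mem_singleton] at hs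
            rcases hs with rfl | rfl
            · exact Finset.mem_inter.mpr ⟨(SimpleGraph.mem_neighborFinset G t s).mpr
                ((SimpleGraph.mem_neighborFinset G s t).mp h1.1).symm, hr1I⟩
            · exact Finset.mem_inter.mpr ⟨(SimpleGraph.mem_neighborFinset G t s).mpr
                ((SimpleGraph.mem_neighborFinset G s t).mp h2.1).symm, hzI⟩
          have := Finset.card_le_card hsub2
          rw [Finset.card_pair (Ne.symm hzr1)] at this
          omega
        have hXsub : ((G.neighborFinset r1 ∩ W) \ S) ∪ ((G.neighborFinset z ∩ W) \ S)
            ⊆ (Finset.univ \ I) \ S := by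
          intro t ht
          rcases Finset.mem_union.mp ht with h | h
          · obtain ⟨h1, h2⟩ := Finset.mem_sdiff.mp h
            refine Finset.mem_sdiff.mpr ⟨?_, h2⟩
            exact Finset.mem_sdiff.mpr ⟨Finset.mem_univ t,
              (hmemW t).mp (Finset.mem_inter.mp h1).2⟩
          · obtain ⟨h1, h2⟩ := Finset.mem_sdiff.mp h
            refine Finset.mem_sdiff.mpr ⟨?_, h2⟩
            exact Finset.mem_sdiff.mpr ⟨Finset.mem_univ t,
              (hmemW t).mp (Finset.mem_inter.mp h1).2⟩
        have hXeq : (Finset.univ \ I) \ S =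
            ((G.neighborFinset r1 ∩ W) \ S) ∪ ((G.neighborFinset z ∩ W) \ S) := by
          symm
          apply Finset.eq_of_subset_of_card_le hXsub
          rw [hXcard, Finset.card_union_of_disjoint hdisjK]
          omega
        -- degree bounds for x and y
        have hdxy : ∀ t0 : V, t0 ∈ I → t0 ≠ r1 → t0 ≠ z →
            (∀ u, u ∈ G.neighborFinset r1 ∩ W → ¬ G.Adj t0 u) →
            (∀ u, u ∈ G.neighborFinset z ∩ W → ¬ G.Adj t0 u) →
            (G.neighborFinset t0 ∩ S).card = 1 →
            (G.neighborFinset t0 ∩ I).card ≤ 2 → G.degree t0 ≤ 3 := by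
          intro t0 _ _ _ hK1 hK2 hSc hIc
          have hsub3 : G.neighborFinset t0 ⊆ ((G.neighborFinset t0 ∩ I) ∪
              (G.neighborFinset t0 ∩ S)) ∪
              (G.neighborFinset t0 ∩ ((Finset.univ \ I) \ S)) := by
            intro t ht
            by_cases h1 : t ∈ I
            · exact Finset.mem_union_left _ (Finset.mem_union_left _
                (Finset.mem_inter.mpr ⟨ht, h1⟩))
            by_cases h2 : t ∈ S
            · exact Finset.mem_union_left _ (Finset.mem_union_right _
                (Finset.mem_inter.mpr ⟨ht, h2⟩))
            · exact Finset.mem_union_right _ (Finset.mem_inter.mpr ⟨ht,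
                Finset.mem_sdiff.mpr ⟨Finset.mem_sdiff.mpr ⟨Finset.mem_univ t, h1⟩, h2⟩⟩)
          have hXempty : G.neighborFinset t0 ∩ ((Finset.univ \ I) \ S) = ∅ := by
            rw [hXeq, Finset.eq_empty_iff_forall_notMem]
            intro t ht
            obtain ⟨h1, h2⟩ := Finset.mem_inter.mp ht
            have hadj := (SimpleGraph.mem_neighborFinset G t0 t).mp h1
            rcases Finset.mem_union.mp h2 with h | h
            · exact hK1 t (Finset.mem_sdiff.mp h).1 hadj
            · exact hK2 t (Finset.mem_sdiff.mp h).1 hadj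
          have hc1 := Finset.card_le_card hsub3
          have hc2 := Finset.card_union_le ((G.neighborFinset t0 ∩ I) ∪
              (G.neighborFinset t0 ∩ S)) (G.neighborFinset t0 ∩ ((Finset.univ \ I) \ S))
          have hc3 := Finset.card_union_le (G.neighborFinset t0 ∩ I)
            (G.neighborFinset t0 ∩ S)
          have hc4 : (G.neighborFinset t0 ∩ ((Finset.univ \ I) \ S)).card = 0 := by
            rw [hXempty]; rfl
          have hc5 : G.degree t0 = (G.neighborFinset t0).card := rfl
          omega
        have hNxI : (G.neighborFinset x ∩ I).card ≤ 2 := by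
          have hsub2 : G.neighborFinset x ∩ I ⊆ {r1, z} := by
            intro t ht
            obtain ⟨h1, h2⟩ := Finset.mem_inter.mp ht
            rw [hIeq] at h2
            simp only [Finset.mem_insert, Finset.mem_singleton] at h2 ⊢
            have hadj := (SimpleGraph.mem_neighborFinset G x t).mp h1
            rcases h2 with rfl | rfl | rfl | rfl
            · exact Or.inl rfl
            · exact Or.inr rfl
            · exact absurd hadj (G.irrefl)
            · exact absurd hadj hnxy
          have := Finset.card_le_card hsub2
          rw [Finset.card_pair (Ne.symm hzr1)] at this
          exact this
        have hNyI : (G.neighborFinset y ∩ I).card ≤ 2 := by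
          have hsub2 : G.neighborFinset y ∩ I ⊆ {r1, z} := by
            intro t ht
            obtain ⟨h1, h2⟩ := Finset.mem_inter.mp ht
            rw [hIeq] at h2
            simp only [Finset.mem_insert, Finset.mem_singleton] at h2 ⊢
            have hadj := (SimpleGraph.mem_neighborFinset G y t).mp h1
            rcases h2 with rfl | rfl | rfl | rfl
            · exact Or.inl rfl
            · exact Or.inr rfl
            · exact absurd hadj (fun h => hnxy h.symm)
            · exact absurd hadj (G.irrefl)
          have := Finset.card_le_card hsub2
          rw [Finset.card_pair (Ne.symm hzr1)] at this
          exact this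
        have hdx : G.degree x ≤ 3 := hdxy x hxI hxr1 (fun h => hzx h.symm) hxK1 hxK2 hS1x hNxI
        have hdy : G.degree y ≤ 3 := hdxy y hyI hyr1 (fun h => hzy h.symm) hyK1 hyK2 hS1y hNyI
        omega

  -- ===== dispatch on whether W is a clique =====
  by_cases hclq : ∀ u ∈ W, ∀ v ∈ W, u ≠ v → G.Adj u v
  · -- W is a clique
    have hWa : ∀ r ∈ I, ∀ w ∈ W, ∀ w' ∈ W, G.Adj r w → G.Adj r w' → w = w' := by
      intro r hr w hw w' hw' haw haw'
      by_contra hne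
      have hwF : w ∈ bootClosure G 2 {w, w'} := subset_bootClosure G 2 _ (by simp)
      have hw'F : w' ∈ bootClosure G 2 {w, w'} := subset_bootClosure G 2 _ (by simp)
      have hWF : ∀ x ∈ W, x ∈ bootClosure G 2 {w, w'} := by
        intro x hx
        by_cases h1 : x = w
        · exact h1 ▸ hwF
        by_cases h2 : x = w'
        · exact h2 ▸ hw'F
        exact mem_closed_of_two G (bootClosure_isClosed G _) hwF hw'F hne
          (hclq x hx w hw h1) (hclq x hx w' hw' h2)
      have hrF : r ∈ bootClosure G 2 {w, w'} :=
        mem_closed_of_two G (bootClosure_isClosed G _) hwF hw'F hne haw haw'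
      have hrW : r ∉ W := fun h => ((hmemW r).mp h) hr
      have hsub : insert r W ⊆ bootClosure G 2 {w, w'} := by
        intro t ht
        rcases Finset.mem_insert.mp ht with rfl | ht2
        · exact hrF
        · exact hWF t ht2
      have hc1 : (insert r W).card = W.card + 1 := Finset.card_insert_of_notMem hrW
      have hc2 := Finset.card_le_card hsub
      have hc3 := hMax w w' hne
      have himgeq : Finset.image wch D = W := by
        apply Finset.eq_of_subset_of_card_le
        · intro t ht
          obtain ⟨r', hr', rfl⟩ := Finset.mem_image.mp ht
          exact hwchW r' hr'
        · rw [Finset.card_image_of_injOn (fun a ha b hb h => hinj a ha b hb h)]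
          omega
      have hwr : ∀ w0, w0 ∈ W → G.Adj r w0 → wch r = w0 := by
        intro w0 hw0 hadj
        obtain ⟨r', hr', hre⟩ := Finset.mem_image.mp (himgeq ▸ hw0)
        have hadj' : G.Adj r' w0 := by
          have := hwchAdj r' hr'
          rwa [hre] at this
        have h1 := hM3 w0 hw0
        rw [Finset.card_le_one] at h1
        have he : r' = r := by
          refine h1 r' ?_ r ?_
          · exact Finset.mem_inter.mpr ⟨(SimpleGraph.mem_neighborFinset G w0 r').mpr
              hadj'.symm, hDI r' hr'⟩
          · exact Finset.mem_inter.mpr ⟨(SimpleGraph.mem_neighborFinset G w0 r).mpr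
              hadj.symm, hr⟩
        rw [← he, hre]
      exact hne ((hwr w hw haw).symm.trans (hwr w' hw' haw'))
    have hWclosed : IsClosedSet G W := by
      intro v hv
      have hvI : v ∈ I := by by_contra h; exact hv ((hmemW v).mpr h)
      rw [Finset.card_le_one]
      intro a ha b hb
      obtain ⟨ha1, ha2⟩ := Finset.mem_inter.mp ha
      obtain ⟨hb1, hb2⟩ := Finset.mem_inter.mp hb
      exact hWa v hvI a ha2 b hb2 ((SimpleGraph.mem_neighborFinset G v a).mp ha1)
        ((SimpleGraph.mem_neighborFinset G v b).mp hb1)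
    have hWle : W.card ≤ I.card := by
      obtain ⟨w, hw, w', hw', hww⟩ := Finset.one_lt_card.mp (by omega : 1 < W.card)
      have hwF : w ∈ bootClosure G 2 {w, w'} := subset_bootClosure G 2 _ (by simp)
      have hw'F : w' ∈ bootClosure G 2 {w, w'} := subset_bootClosure G 2 _ (by simp)
      have hWF : ∀ x ∈ W, x ∈ bootClosure G 2 {w, w'} := by
        intro x hx
        by_cases h1 : x = w
        · exact h1 ▸ hwF
        by_cases h2 : x = w'
        · exact h2 ▸ hw'F
        exact mem_closed_of_two G (bootClosure_isClosed G _) hwF hw'F hww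
          (hclq x hx w hw h1) (hclq x hx w' hw' h2)
      have hc2 := Finset.card_le_card (fun t ht => hWF t ht)
      have hc3 := hMax w w' hww
      omega
    by_cases hWeq : W.card = I.card
    · exact brA W hWclosed hWeq (fun x hx => (hmemW x).mp hx)
    · -- W.card = I.card - 1 : the cascade covering everything
      have hI7 : 7 ≤ I.card := by omega
      have hcomp2 : ∀ p ∈ I, (I.filter (fun z => z ≠ p ∧ ¬ G.Adj p z)).card ≤ 2 := by
        intro p hp
        by_contra hc
        push_neg at hc
        obtain ⟨q, hq, q', hq', q'', hq'', hne1, hne2, hne3⟩ :=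
          Finset.two_lt_card.mp
            (by omega : 2 < (I.filter (fun z => z ≠ p ∧ ¬ G.Adj p z)).card)
        simp only [Finset.mem_filter] at hq hq' hq''
        have hpW : p ∉ W := fun h => ((hmemW p).mp h) hp
        have hqW : q ∉ W := fun h => ((hmemW q).mp h) hq.1
        have h1 := M5w W hWclosed p q hpW hqW (Ne.symm hq.2.1) hq.2.2
        have hsub : G.neighborFinset p ∩ G.neighborFinset q ⊆
            I \ ({p, q, q', q''} : Finset V) := by
          intro t ht
          obtain ⟨ht1, ht2⟩ := Finset.mem_inter.mp ht
          have hadjp := (SimpleGraph.mem_neighborFinset G p t).mp ht1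
          have hadjq := (SimpleGraph.mem_neighborFinset G q t).mp ht2
          have htI : t ∈ I := by
            by_contra h
            have htW : t ∈ W := (hmemW t).mpr h
            have h2 := hM3 t htW
            rw [Finset.card_le_one] at h2
            have heq2 : p = q := h2 p
              (Finset.mem_inter.mpr ⟨(SimpleGraph.mem_neighborFinset G t p).mpr
                hadjp.symm, hp⟩) q
              (Finset.mem_inter.mpr ⟨(SimpleGraph.mem_neighborFinset G t q).mpr
                hadjq.symm, hq.1⟩)
            exact (Ne.symm hq.2.1) heq2
          refine Finset.mem_sdiff.mpr ⟨htI, ?_⟩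
          simp only [Finset.mem_insert, Finset.mem_singleton]
          push_neg
          refine ⟨hadjp.ne', hadjq.ne', ?_, ?_⟩
          · intro h; exact hq'.2.2 (h ▸ hadjp)
          · intro h; exact hq''.2.2 (h ▸ hadjp)
        have hc4 : ({p, q, q', q''} : Finset V) ⊆ I := by
          intro t ht
          simp only [Finset.mem_insert, Finset.mem_singleton] at ht
          rcases ht with rfl | rfl | rfl | rfl
          exacts [hp, hq.1, hq'.1, hq''.1]
        have hc5 : ({p, q, q', q''} : Finset V).card = 4 := by
          rw [Finset.card_insert_of_notMem (by
              simp only [Finset.mem_insert, Finset.mem_singleton]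
              push_neg
              exact ⟨Ne.symm hq.2.1, Ne.symm hq'.2.1, Ne.symm hq''.2.1⟩),
            Finset.card_insert_of_notMem (by
              simp only [Finset.mem_insert, Finset.mem_singleton]
              push_neg
              exact ⟨hne1, hne2⟩),
            Finset.card_pair hne3]
        have hc6 : (I \ ({p, q, q', q''} : Finset V)).card + 4 = I.card := by
          rw [Finset.card_sdiff_of_subset hc4, hc5]
          have := Finset.card_le_card hc4
          omega
        have hc7 := Finset.card_le_card hsub
        omega
      obtain ⟨r1', hr1D'⟩ := Finset.card_pos.mp (by omega : 0 < D.card)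
      have hr1I' := hDI r1' hr1D'
      have hr1F' : r1' ∈ I := hr1I'
      -- a neighbour r2 of r1' inside D
      have hcand : 1 ≤ (D.filter (fun z => z ≠ r1' ∧ G.Adj r1' z)).card := by
        have hsub : D ⊆ insert r1' ((I.filter (fun z => z ≠ r1' ∧ ¬ G.Adj r1' z)) ∪
            (D.filter (fun z => z ≠ r1' ∧ G.Adj r1' z))) := by
          intro t ht
          by_cases h1 : t = r1'
          · simp [h1]
          by_cases h2 : G.Adj r1' t
          · refine Finset.mem_insert_of_mem (Finset.mem_union_right _ ?_)
            simp [Finset.mem_filter, ht, h1, h2]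
          · refine Finset.mem_insert_of_mem (Finset.mem_union_left _ ?_)
            simp [Finset.mem_filter, hDI t ht, h1, h2]
        have hc1 := Finset.card_le_card hsub
        have hc2 := Finset.card_insert_le r1' ((I.filter (fun z => z ≠ r1' ∧ ¬ G.Adj r1' z)) ∪
            (D.filter (fun z => z ≠ r1' ∧ G.Adj r1' z)))
        have hc3 := Finset.card_union_le (I.filter (fun z => z ≠ r1' ∧ ¬ G.Adj r1' z))
            (D.filter (fun z => z ≠ r1' ∧ G.Adj r1' z))
        have hc4 := hcomp2 r1' hr1I'
        omega
      obtain ⟨r2, hr2c⟩ := Finset.card_pos.mp (by omega :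
        0 < (D.filter (fun z => z ≠ r1' ∧ G.Adj r1' z)).card)
      simp only [Finset.mem_filter] at hr2c
      obtain ⟨hr2D, hr2ne, hr2adj⟩ := hr2c
      have hr2I := hDI r2 hr2D
      have hw1W' := hwchW r1' hr1D'
      have hw1adj' := hwchAdj r1' hr1D'
      have hw2W' := hwchW r2 hr2D
      have hw2adj' := hwchAdj r2 hr2D
      have hw1I' : wch r1' ∉ I := (hmemW (wch r1')).mp hw1W'
      have hw12 : wch r1' ≠ wch r2 :=
        fun h => hr2ne (hinj r1' hr1D' r2 hr2D h).symm
      have hFc : IsClosedSet G (bootClosure G 2 {wch r1', r2}) := bootClosure_isClosed G _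
      have hw1F : wch r1' ∈ bootClosure G 2 {wch r1', r2} :=
        subset_bootClosure G 2 _ (by simp)
      have hr2F : r2 ∈ bootClosure G 2 {wch r1', r2} := subset_bootClosure G 2 _ (by simp)
      have hw1r2 : wch r1' ≠ r2 := fun h => hw1I' (h ▸ hr2I)
      have hr1F : r1' ∈ bootClosure G 2 {wch r1', r2} :=
        mem_closed_of_two G hFc hw1F hr2F hw1r2 hw1adj' hr2adj
      have hw2F : wch r2 ∈ bootClosure G 2 {wch r1', r2} :=
        mem_closed_of_two G hFc hr2F hw1F (Ne.symm hw1r2) hw2adj'.symm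
          (hclq (wch r2) hw2W' (wch r1') hw1W' (Ne.symm hw12))
      have hWF : ∀ t ∈ W, t ∈ bootClosure G 2 {wch r1', r2} := by
        intro t ht
        by_cases h1 : t = wch r1'
        · exact h1 ▸ hw1F
        by_cases h2 : t = wch r2
        · exact h2 ▸ hw2F
        exact mem_closed_of_two G hFc hw1F hw2F hw12
          (hclq t ht (wch r1') hw1W' h1) (hclq t ht (wch r2) hw2W' h2)
      have hznadjAll : ∀ z ∈ D, z ∉ bootClosure G 2 {wch r1', r2} →
          ∀ r' ∈ I, r' ∈ bootClosure G 2 {wch r1', r2} → ¬ G.Adj z r' := by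
        intro z hzD hzF r' hr'I hr'F hadj
        have hwzF : wch z ∈ bootClosure G 2 {wch r1', r2} := hWF _ (hwchW z hzD)
        have hner : r' ≠ wch z :=
          fun h => ((hmemW (wch z)).mp (hwchW z hzD)) (h ▸ hr'I)
        exact hzF (mem_closed_of_two G hFc hr'F hwzF hner hadj (hwchAdj z hzD))
      have hDsubI : D ⊆ I := fun t ht => hDI t ht
      have hIDcard : (I \ D).card ≤ 1 := by
        rw [Finset.card_sdiff_of_subset hDsubI]
        omega
      have hDF : ∀ t ∈ D, t ∈ bootClosure G 2 {wch r1', r2} := by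
        by_contra hc
        push_neg at hc
        obtain ⟨z, hzD, hzF⟩ := hc
        -- the set of vertices of I inside the closure is large
        have hsplit := Finset.card_filter_add_card_filter_not
          (s := I) (p := fun t => t ∈ bootClosure G 2 {wch r1', r2})
        have hnotF : I.filter (fun t => ¬ t ∈ bootClosure G 2 {wch r1', r2}) ⊆
            (D.filter (fun t => ¬ t ∈ bootClosure G 2 {wch r1', r2})) ∪ (I \ D) := by
          intro t ht
          obtain ⟨ht1, ht2⟩ := Finset.mem_filter.mp ht
          by_cases h1 : t ∈ D
          · exact Finset.mem_union_left _ (Finset.mem_filter.mpr ⟨h1, ht2⟩)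
          · exact Finset.mem_union_right _ (Finset.mem_sdiff.mpr ⟨ht1, h1⟩)
        have hDnF : D.filter (fun t => ¬ t ∈ bootClosure G 2 {wch r1', r2}) ⊆
            I.filter (fun t => t ≠ r1' ∧ ¬ G.Adj r1' t) := by
          intro t ht
          obtain ⟨ht1, ht2⟩ := Finset.mem_filter.mp ht
          have htne : t ≠ r1' := fun h => ht2 (h ▸ hr1F)
          refine Finset.mem_filter.mpr ⟨hDI t ht1, htne, ?_⟩
          intro hadj
          exact hznadjAll t ht1 ht2 r1' hr1I' hr1F hadj.symm
        have hc1 := Finset.card_le_card hnotF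
        have hc2 := Finset.card_union_le
          (D.filter (fun t => ¬ t ∈ bootClosure G 2 {wch r1', r2})) (I \ D)
        have hc3 := Finset.card_le_card hDnF
        have hc4 := hcomp2 r1' hr1I'
        -- so at least I.card - 3 vertices of I are in the closure
        have hbig : I.card ≤ (I.filter (fun t => t ∈ bootClosure G 2 {wch r1', r2})).card
            + 3 := by omega
        -- but z is nonadjacent to all of them : contradicts hcomp2 z
        have hzI := hDI z hzD
        have hsub2 : I.filter (fun t => t ∈ bootClosure G 2 {wch r1', r2}) ⊆
            I.filter (fun t => t ≠ z ∧ ¬ G.Adj z t) := by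
          intro t ht
          obtain ⟨ht1, ht2⟩ := Finset.mem_filter.mp ht
          refine Finset.mem_filter.mpr ⟨ht1, fun h => hzF (h ▸ ht2), ?_⟩
          exact hznadjAll z hzD hzF t ht1 ht2
        have hc5 := Finset.card_le_card hsub2
        have hc6 := hcomp2 z hzI
        omega
      have hIF : ∀ t ∈ I, t ∈ bootClosure G 2 {wch r1', r2} := by
        intro t ht
        by_contra htF
        have htD : t ∉ D := fun h => htF (hDF t h)
        -- t has at least two neighbours among I ∩ F
        have hDsubF : D ⊆ I.filter (fun s => s ∈ bootClosure G 2 {wch r1', r2}) :=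
          fun s hs => Finset.mem_filter.mpr ⟨hDI s hs, hDF s hs⟩
        have hbigc : I.card - 1 ≤
            (I.filter (fun s => s ∈ bootClosure G 2 {wch r1', r2})).card := by
          have := Finset.card_le_card hDsubF
          omega
        have hBt : 2 ≤ ((I.filter (fun s => s ∈ bootClosure G 2 {wch r1', r2})).filter
            (fun s => s ≠ t ∧ G.Adj t s)).card := by
          have hsub : (I.filter (fun s => s ∈ bootClosure G 2 {wch r1', r2})) ⊆
              insert t ((I.filter (fun s => s ≠ t ∧ ¬ G.Adj t s)) ∪
              ((I.filter (fun s => s ∈ bootClosure G 2 {wch r1', r2})).filter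
                (fun s => s ≠ t ∧ G.Adj t s))) := by
            intro s hs
            by_cases h1 : s = t
            · simp [h1]
            by_cases h2 : G.Adj t s
            · refine Finset.mem_insert_of_mem (Finset.mem_union_right _ ?_)
              exact Finset.mem_filter.mpr ⟨hs, h1, h2⟩
            · refine Finset.mem_insert_of_mem (Finset.mem_union_left _ ?_)
              exact Finset.mem_filter.mpr ⟨(Finset.mem_filter.mp hs).1, h1, h2⟩
          have hc1 := Finset.card_le_card hsub
          have hc2 := Finset.card_insert_le t ((I.filter (fun s => s ≠ t ∧ ¬ G.Adj t s)) ∪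
              ((I.filter (fun s => s ∈ bootClosure G 2 {wch r1', r2})).filter
                (fun s => s ≠ t ∧ G.Adj t s)))
          have hc3 := Finset.card_union_le (I.filter (fun s => s ≠ t ∧ ¬ G.Adj t s))
              ((I.filter (fun s => s ∈ bootClosure G 2 {wch r1', r2})).filter
                (fun s => s ≠ t ∧ G.Adj t s))
          have hc4 := hcomp2 t ht
          omega
        obtain ⟨a, ha, b, hb, hab⟩ := Finset.one_lt_card.mp (by omega :
          1 < ((I.filter (fun s => s ∈ bootClosure G 2 {wch r1', r2})).filter
            (fun s => s ≠ t ∧ G.Adj t s)).card)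
        obtain ⟨ha1, ha2, ha3⟩ := Finset.mem_filter.mp ha
        obtain ⟨hb1, hb2, hb3⟩ := Finset.mem_filter.mp hb
        exact htF (mem_closed_of_two G hFc (Finset.mem_filter.mp ha1).2
          (Finset.mem_filter.mp hb1).2 hab ha3 hb3)
      have huniv : bootClosure G 2 {wch r1', r2} = Finset.univ := by
        apply Finset.eq_univ_of_forall
        intro t
        by_cases h1 : t ∈ I
        · exact hIF t h1
        · exact hWF t ((hmemW t).mpr h1)
      exact hNoUniv (wch r1') r2 hw1r2 huniv
  · -- W is not a clique : build the closed set S inside W and apply brA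
    push_neg at hclq
    obtain ⟨u, hu, v, hv, huv, hnadjuv⟩ := hclq
    obtain ⟨hC1, hC2, hC3, _, _, _, hC8⟩ := M5pack I hIclosed rfl u v ((hmemW u).mp hu)
      ((hmemW v).mp hv) huv hnadjuv
    refine brA (bootClosure G 2 {u, v}) (bootClosure_isClosed G _) hC8 ?_
    intro x hx hxI
    rw [hC1] at hx
    rcases Finset.mem_union.mp hx with h | h
    · simp only [Finset.mem_insert, Finset.mem_singleton] at h
      rcases h with rfl | rfl
      · exact ((hmemW x).mp hu) hxI
      · exact ((hmemW x).mp hv) hxI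
    · have hmem2 : x ∈ (G.neighborFinset u ∩ G.neighborFinset v) ∩ I :=
        Finset.mem_inter.mpr ⟨h, hxI⟩
      rw [hC3] at hmem2
      exact Finset.notMem_empty x hmem2
end

section
/- Let G be a connected finite simple graph of order n ≥ 12 in which every pair of distinct nonadjacent vertices has degree sum at least n − 2, and suppose m(G,2) > 2. Let I be a set of maximum cardinality among all closures ⟨A⟩ of two-element sets A ⊆ V(G) under 2-neighbor bootstrap percolation, and let U = V(G) ∖ I. If v ∈ I has at least two neighbors in U, then N(v) ∩ I is an independent set in G. -/
open Finset
open scoped Classical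

/-!
Write `U = Iᶜ`. As `I` is closed, a vertex of `U` has at most one neighbour in `I`. For
nonadjacent `u, u' ∈ U` the degree-sum condition then forces at least `|I| - 2` common
neighbours of `u, u'` in `U`; by maximality of `I`, the closure of `{u, u'}` consists of `u`,
`u'` and these common neighbours, so it misses `I`, and every other vertex of `U` is adjacent to
`u` or `u'`. In particular the two neighbours `u₁, u₂ ∈ U` of `v` are adjacent, so if `a ~ b`
the closure `W` of `{a, u₁}` contains `v, b, u₂`.
If `U` is a clique, `W ⊇ U ∪ {v, a, b}`, and a vertex `z ∈ I \ W` has degree at most `|Wᶜ|`,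
which together with `deg u₁ ≤ |U|` violates the degree-sum condition for `z, u₁`. Otherwise pick
nonadjacent `u, u' ∈ U`, a common neighbour `c` and a vertex `w ∈ U` outside the closure of
`{u, u'}` (which exists because `v` is not in it): then `deg c + deg w ≤ |U| + 1`, so
`|I| ≤ 3`, whereas `|I| ≥ |W| ≥ 4`.
-/

namespace SimpleGraph

variable {V : Type*} [Fintype V] {G : SimpleGraph V}

section Closure

variable {r : ℕ}

def IsBootClosed (G : SimpleGraph V) (r : ℕ) (S : Finset V) : Prop :=
  ∀ w, r ≤ #(G.neighborFinset w ∩ S) → w ∈ S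

theorem subset_bootStep (A : Finset V) : A ⊆ bootStep G r A := subset_union_left

theorem subset_bootClosure (A : Finset V) : A ⊆ bootClosure G r A :=
  Function.id_le_iterate_of_id_le (fun B => subset_bootStep (G := G) (r := r) B) _ A

theorem isFixedPt_iterate_bootStep_or_le_card (A : Finset V) (k : ℕ) :
    Function.IsFixedPt (bootStep G r) ((bootStep G r)^[k] A) ∨
      k ≤ #((bootStep G r)^[k] A) := by
  induction k with
  | zero => simp
  | succ k ih =>
    rw [Function.iterate_succ_apply']
    by_cases hfix : Function.IsFixedPt (bootStep G r) ((bootStep G r)^[k] A)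
    · exact Or.inl (hfix.eq.symm ▸ hfix)
    · have hgrow := card_lt_card ((subset_bootStep _).ssubset_of_ne (Ne.symm hfix))
      have := ih.resolve_left hfix
      exact Or.inr (by omega)

theorem bootStep_bootClosure (A : Finset V) :
    bootStep G r (bootClosure G r A) = bootClosure G r A := by
  rcases isFixedPt_iterate_bootStep_or_le_card (G := G) (r := r) A (Fintype.card V)
    with hfix | hcard
  · exact hfix
  · have huniv : bootClosure G r A = univ :=
      eq_univ_of_card _ (le_antisymm (card_le_univ _) hcard)
    rw [huniv]
    exact univ_subset_iff.mp (subset_bootStep _)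

theorem isBootClosed_bootClosure (A : Finset V) : IsBootClosed G r (bootClosure G r A) :=
  fun w hw => by
    rw [← bootStep_bootClosure A]
    exact mem_union_right _ (mem_filter.mpr ⟨mem_univ _, hw⟩)

end Closure

section TwoNeighbor

variable {S : Finset V} {u u' w x y : V}

theorem IsBootClosed.mem_of_adj_of_adj (hS : IsBootClosed G 2 S) (hx : x ∈ S) (hy : y ∈ S)
    (hxy : x ≠ y) (hwx : G.Adj w x) (hwy : G.Adj w y) : w ∈ S :=
  hS w (one_lt_card.mpr ⟨x, by simp [hwx, hx], y, by simp [hwy, hy], hxy⟩)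

theorem IsBootClosed.card_neighborFinset_inter_le_one (hS : IsBootClosed G 2 S) (hw : w ∉ S) :
    #(G.neighborFinset w ∩ S) ≤ 1 := by
  by_contra h
  exact hw (hS w (by omega))

theorem IsBootClosed.neighborFinset_inter_subset (hS : IsBootClosed G 2 S) (hx : x ∈ S)
    (hy : y ∈ S) (hxy : x ≠ y) : G.neighborFinset x ∩ G.neighborFinset y ⊆ S := by
  intro w hw
  simp only [mem_inter, mem_neighborFinset] at hw
  exact hS.mem_of_adj_of_adj hx hy hxy hw.1.symm hw.2.symm

theorem IsBootClosed.subset_of_isClique (hS : IsBootClosed G 2 S) {K : Finset V}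
    (hK : G.IsClique (K : Set V)) (hx : x ∈ K ∩ S) (hy : y ∈ K ∩ S) (hxy : x ≠ y) : K ⊆ S := by
  intro w hw
  rw [mem_inter] at hx hy
  by_cases hwx : w = x
  · exact hwx ▸ hx.2
  by_cases hwy : w = y
  · exact hwy ▸ hy.2
  exact hS.mem_of_adj_of_adj hx.2 hy.2 hxy (hK hw hx.1 hwx) (hK hw hy.1 hwy)

theorem degree_lt_card_neighborFinset_inter_add_card_compl (S : Finset V) (hw : w ∉ S) :
    G.degree w < #(G.neighborFinset w ∩ S) + #Sᶜ := by
  have hsplit := card_inter_add_card_sdiff (G.neighborFinset w) S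
  have hout : G.neighborFinset w \ S ⊂ Sᶜ := by
    refine ssubset_iff_of_subset (fun x hx => ?_) |>.mpr ⟨w, mem_compl.mpr hw, ?_⟩
    · exact mem_compl.mpr (mem_sdiff.mp hx).2
    · simp
  have := card_lt_card hout
  rw [card_neighborFinset_eq_degree] at hsplit
  omega

theorem IsBootClosed.degree_le_card_compl (hS : IsBootClosed G 2 S) (hw : w ∉ S) :
    G.degree w ≤ #Sᶜ := by
  have := degree_lt_card_neighborFinset_inter_add_card_compl (G := G) S hw
  have := hS.card_neighborFinset_inter_le_one hw
  omega

theorem IsBootClosed.degree_le_card_compl_union_add_one {T : Finset V}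
    (hS : IsBootClosed G 2 S) (hT : IsBootClosed G 2 T) (hwS : w ∉ S) (hwT : w ∉ T) :
    G.degree w ≤ #(S ∪ T)ᶜ + 1 := by
  have := degree_lt_card_neighborFinset_inter_add_card_compl (G := G) (S ∪ T)
    (notMem_union.mpr ⟨hwS, hwT⟩)
  have := card_union_le (G.neighborFinset w ∩ S) (G.neighborFinset w ∩ T)
  have := hS.card_neighborFinset_inter_le_one hwS
  have := hT.card_neighborFinset_inter_le_one hwT
  rw [inter_union_distrib_left] at *
  omega

theorem IsBootClosed.degree_add_degree_le (hS : IsBootClosed G 2 S) (hu : u ∉ S)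
    (hu' : u' ∉ S) :
    G.degree u + G.degree u' ≤
      #((G.neighborFinset u ∪ G.neighborFinset u') \ S) +
        #((G.neighborFinset u ∩ G.neighborFinset u') \ S) + 2 := by
  have hsplit (x : V) := card_inter_add_card_sdiff (G.neighborFinset x) S
  have := hS.card_neighborFinset_inter_le_one hu
  have := hS.card_neighborFinset_inter_le_one hu'
  have := card_union_add_card_inter (G.neighborFinset u \ S) (G.neighborFinset u' \ S)
  have hinter : (G.neighborFinset u ∩ G.neighborFinset u') \ S =
      G.neighborFinset u \ S ∩ (G.neighborFinset u' \ S) := inf_sdiff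
  rw [← union_sdiff_distrib, ← hinter] at this
  simp only [card_neighborFinset_eq_degree] at hsplit
  have := hsplit u
  have := hsplit u'
  omega

theorem neighborFinset_union_sdiff_subset (S : Finset V) (hnadj : ¬ G.Adj u u') :
    (G.neighborFinset u ∪ G.neighborFinset u') \ S ⊆ Sᶜ \ {u, u'} := by
  intro x hx
  simp only [mem_sdiff, mem_union, mem_neighborFinset, mem_compl, mem_insert,
    mem_singleton] at hx ⊢
  refine ⟨hx.2, ?_⟩
  rintro (rfl | rfl)
  · exact hx.1.elim G.irrefl (fun h => hnadj h.symm)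
  · exact hx.1.elim hnadj G.irrefl

theorem insert_insert_neighborFinset_inter_subset_bootClosure (hne : u ≠ u') :
    insert u (insert u' (G.neighborFinset u ∩ G.neighborFinset u')) ⊆
      bootClosure G 2 {u, u'} := by
  have hu : u ∈ bootClosure G 2 {u, u'} := subset_bootClosure _ (by simp)
  have hu' : u' ∈ bootClosure G 2 {u, u'} := subset_bootClosure _ (by simp)
  exact insert_subset hu (insert_subset hu'
    ((isBootClosed_bootClosure _).neighborFinset_inter_subset hu hu' hne))

theorem card_insert_insert_neighborFinset_inter (hne : u ≠ u') :
    #(insert u (insert u' (G.neighborFinset u ∩ G.neighborFinset u'))) =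
      #(G.neighborFinset u ∩ G.neighborFinset u') + 2 := by
  rw [card_insert_of_notMem, card_insert_of_notMem] <;> simp [hne]

end TwoNeighbor

section MaximalClosure

def OreCondition (G : SimpleGraph V) (k : ℕ) : Prop :=
  ∀ x y : V, x ≠ y → ¬ G.Adj x y → k ≤ G.degree x + G.degree y

variable {I W : Finset V} {u u' v w : V}

theorem card_le_card_neighborFinset_inter_sdiff_add_two
    (hOre : OreCondition G (Fintype.card V - 2)) (hI : IsBootClosed G 2 I) (hu : u ∉ I)
    (hu' : u' ∉ I) (hne : u ≠ u') (hnadj : ¬ G.Adj u u') :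
    #I ≤ #((G.neighborFinset u ∩ G.neighborFinset u') \ I) + 2 := by
  have hdeg := hOre u u' hne hnadj
  have hsum := hI.degree_add_degree_le hu hu'
  have hpair : {u, u'} ⊆ Iᶜ := by simp [insert_subset_iff, hu, hu']
  have hsub := card_le_card (neighborFinset_union_sdiff_subset I hnadj)
  have hcompl := card_le_card hpair
  rw [card_sdiff_of_subset hpair, card_pair hne, card_compl] at hsub
  rw [card_pair hne, card_compl] at hcompl
  omega

theorem card_neighborFinset_inter_add_two_le
    (hImax : ∀ A : Finset V, #A = 2 → #(bootClosure G 2 A) ≤ #I) (hne : u ≠ u') :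
    #(G.neighborFinset u ∩ G.neighborFinset u') + 2 ≤ #I :=
  (card_insert_insert_neighborFinset_inter hne).symm.le.trans <|
    (card_le_card (insert_insert_neighborFinset_inter_subset_bootClosure hne)).trans
      (hImax _ (card_pair hne))

theorem disjoint_bootClosure_pair (hOre : OreCondition G (Fintype.card V - 2))
    (hI : IsBootClosed G 2 I) (hImax : ∀ A : Finset V, #A = 2 → #(bootClosure G 2 A) ≤ #I)
    (hu : u ∉ I) (hu' : u' ∉ I) (hne : u ≠ u') (hnadj : ¬ G.Adj u u') :
    Disjoint (bootClosure G 2 {u, u'}) I := by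
  have hlow := card_le_card_neighborFinset_inter_sdiff_add_two hOre hI hu hu' hne hnadj
  have hsub := insert_insert_neighborFinset_inter_subset_bootClosure (G := G) hne
  have hcard := card_insert_insert_neighborFinset_inter (G := G) hne
  have hmax := hImax _ (card_pair hne)
  have hclosure := card_le_card hsub
  have hCI : Disjoint (G.neighborFinset u ∩ G.neighborFinset u') I :=
    sdiff_eq_self_iff_disjoint.mp (eq_of_subset_of_card_le sdiff_subset (by omega))
  have hsdiff := card_le_card (sdiff_subset :
    (G.neighborFinset u ∩ G.neighborFinset u') \ I ⊆ G.neighborFinset u ∩ G.neighborFinset u')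
  rw [← eq_of_subset_of_card_le hsub (by omega)]
  simp [hu, hu', hCI]

theorem isClique_neighborFinset_inter_compl (hOre : OreCondition G (Fintype.card V - 2))
    (hI : IsBootClosed G 2 I) (hImax : ∀ A : Finset V, #A = 2 → #(bootClosure G 2 A) ≤ #I)
    (hv : v ∈ I) : G.IsClique (G.neighborFinset v ∩ Iᶜ : Finset V) := by
  intro u hu u' hu' hne
  by_contra hnadj
  simp only [coe_inter, coe_compl, Set.mem_inter_iff, mem_coe, mem_neighborFinset,
    Set.mem_compl_iff] at hu hu'
  have hvT : v ∈ bootClosure G 2 {u, u'} :=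
    (isBootClosed_bootClosure _).mem_of_adj_of_adj (subset_bootClosure _ (by simp))
      (subset_bootClosure _ (by simp)) hne hu.1 hu'.1
  exact Finset.disjoint_left.mp
    (disjoint_bootClosure_pair hOre hI hImax hu.2 hu'.2 hne hnadj) hvT hv

theorem adj_or_adj_of_notMem (hOre : OreCondition G (Fintype.card V - 2))
    (hI : IsBootClosed G 2 I) (hImax : ∀ A : Finset V, #A = 2 → #(bootClosure G 2 A) ≤ #I)
    (hu : u ∉ I) (hu' : u' ∉ I) (hne : u ≠ u') (hnadj : ¬ G.Adj u u')
    (hw : w ∉ I) (hwu : w ≠ u) (hwu' : w ≠ u') : G.Adj u w ∨ G.Adj u' w := by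
  have hdeg := hOre u u' hne hnadj
  have hsum := hI.degree_add_degree_le hu hu'
  have hupper := card_neighborFinset_inter_add_two_le hImax hne
  have hsdiff := card_le_card
    (sdiff_subset : (G.neighborFinset u ∩ G.neighborFinset u') \ I ⊆ _)
  have hpair : {u, u'} ⊆ Iᶜ := by simp [insert_subset_iff, hu, hu']
  have hcover := eq_of_subset_of_card_le (neighborFinset_union_sdiff_subset I hnadj)
    (by rw [card_sdiff_of_subset hpair, card_pair hne, card_compl]; omega)
  have hwmem : w ∈ Iᶜ \ {u, u'} := by simp [hw, hwu, hwu']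
  rw [← hcover] at hwmem
  simpa using (mem_sdiff.mp hwmem).1

theorem not_adj_of_mem_neighborFinset_inter (hOre : OreCondition G (Fintype.card V - 2))
    (hI : IsBootClosed G 2 I) (hImax : ∀ A : Finset V, #A = 2 → #(bootClosure G 2 A) ≤ #I)
    (hu : u ∉ I) (hu' : u' ∉ I) (hne : u ≠ u') (hnadj : ¬ G.Adj u u') {c : V}
    (hc : c ∈ G.neighborFinset u ∩ G.neighborFinset u') (hwI : w ∉ I)
    (hwT : w ∉ bootClosure G 2 {u, u'}) : ¬ G.Adj w c := by
  intro hwc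
  have hT := isBootClosed_bootClosure (G := G) (r := 2) {u, u'}
  have huT : u ∈ bootClosure G 2 {u, u'} := subset_bootClosure _ (by simp)
  have hu'T : u' ∈ bootClosure G 2 {u, u'} := subset_bootClosure _ (by simp)
  have hcT : c ∈ bootClosure G 2 {u, u'} :=
    insert_insert_neighborFinset_inter_subset_bootClosure hne (by simp [hc])
  simp only [mem_inter, mem_neighborFinset] at hc
  rcases adj_or_adj_of_notMem hOre hI hImax hu hu' hne hnadj hwI
    (fun h => hwT (h ▸ huT)) (fun h => hwT (h ▸ hu'T)) with h | h
  · exact hwT (hT.mem_of_adj_of_adj huT hcT (G.ne_of_adj hc.1) h.symm hwc)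
  · exact hwT (hT.mem_of_adj_of_adj hu'T hcT (G.ne_of_adj hc.2) h.symm hwc)

theorem degree_le_card_bootClosure_pair (hOre : OreCondition G (Fintype.card V - 2))
    (hI : IsBootClosed G 2 I) (hImax : ∀ A : Finset V, #A = 2 → #(bootClosure G 2 A) ≤ #I)
    (hu : u ∉ I) (hu' : u' ∉ I) (hne : u ≠ u') (hnadj : ¬ G.Adj u u') {c : V}
    (hc : c ∈ G.neighborFinset u ∩ G.neighborFinset u') :
    G.degree c ≤ #(bootClosure G 2 {u, u'}) := by
  have hcT : c ∈ bootClosure G 2 {u, u'} :=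
    insert_insert_neighborFinset_inter_subset_bootClosure hne (by simp [hc])
  have hcI : c ∉ I :=
    Finset.disjoint_left.mp (disjoint_bootClosure_pair hOre hI hImax hu hu' hne hnadj) hcT
  have hlt := degree_lt_card_neighborFinset_inter_add_card_compl (G := G)
    (bootClosure G 2 {u, u'})ᶜ (by simpa using hcT)
  have hsub : G.neighborFinset c ∩ (bootClosure G 2 {u, u'})ᶜ ⊆ G.neighborFinset c ∩ I :=
    fun x hx => by
      simp only [mem_inter, mem_compl, mem_neighborFinset] at hx ⊢
      exact ⟨hx.1, by_contra fun hxI =>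
        not_adj_of_mem_neighborFinset_inter hOre hI hImax hu hu' hne hnadj hc hxI hx.2 hx.1.symm⟩
  have := card_le_card hsub
  have := hI.card_neighborFinset_inter_le_one hcI
  rw [compl_compl] at hlt
  omega

theorem card_le_three_of_not_adj (hOre : OreCondition G (Fintype.card V - 2))
    (hI : IsBootClosed G 2 I) (hImax : ∀ A : Finset V, #A = 2 → #(bootClosure G 2 A) ≤ #I)
    (hu : u ∉ I) (hu' : u' ∉ I) (hne : u ≠ u') (hnadj : ¬ G.Adj u u') (hv : v ∈ I)
    (hv2 : 2 ≤ #(G.neighborFinset v ∩ Iᶜ)) : #I ≤ 3 := by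
  set T := bootClosure G 2 {u, u'}
  have hT : IsBootClosed G 2 T := isBootClosed_bootClosure _
  have hTI : Disjoint T I := disjoint_bootClosure_pair hOre hI hImax hu hu' hne hnadj
  by_contra! hI4
  obtain ⟨c, hc⟩ : (G.neighborFinset u ∩ G.neighborFinset u').Nonempty := by
    have := card_le_card_neighborFinset_inter_sdiff_add_two hOre hI hu hu' hne hnadj
    have := card_le_card (sdiff_subset :
      (G.neighborFinset u ∩ G.neighborFinset u') \ I ⊆ G.neighborFinset u ∩ G.neighborFinset u')
    rw [← card_pos]
    omega
  have hcT : c ∈ T := insert_insert_neighborFinset_inter_subset_bootClosure hne (by simp [hc])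
  obtain ⟨w, hwI, hwT⟩ : ∃ w, w ∉ I ∧ w ∉ T := by
    by_contra! hIT
    have hvT : v ∈ T :=
      hT v (hv2.trans (card_le_card (inter_subset_inter_left fun x hx => hIT x (mem_compl.mp hx))))
    exact Finset.disjoint_left.mp hTI hvT hv
  have hdeg_c : G.degree c ≤ #T :=
    degree_le_card_bootClosure_pair hOre hI hImax hu hu' hne hnadj hc
  have hdeg_w := hI.degree_le_card_compl_union_add_one hT hwI hwT
  have hOre_wc := hOre w c (fun h => hwT (h ▸ hcT))
    (not_adj_of_mem_neighborFinset_inter hOre hI hImax hu hu' hne hnadj hc hwI hwT)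
  have hcard : #(I ∪ T)ᶜ + #I + #T = Fintype.card V := by
    rw [card_compl, card_union_of_disjoint hTI.symm]
    have := card_le_univ (I ∪ T)
    rw [card_union_of_disjoint hTI.symm] at this
    omega
  omega

theorem card_inter_le_two_of_compl_subset (hOre : OreCondition G (Fintype.card V - 2))
    (hI : IsBootClosed G 2 I) (hW : IsBootClosed G 2 W) (hWI : #W ≤ #I) (hIW : Iᶜ ⊆ W)
    (hv : v ∈ W ∩ I) (hu : u ∉ I) (hvu : G.Adj v u) : #(W ∩ I) ≤ 2 := by
  rw [mem_inter] at hv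
  obtain ⟨z, hz⟩ : Wᶜ.Nonempty := by
    have := card_lt_card (ssubset_univ_iff.mpr fun h => hu (h ▸ mem_univ u) : I ⊂ univ)
    rw [← card_pos, card_compl, card_univ] at *
    omega
  have hzW : z ∉ W := mem_compl.mp hz
  have hzI : z ∈ I := by_contra fun h => hzW (hIW (mem_compl.mpr h))
  have hzu : ¬ G.Adj z u := fun h =>
    hu (hI.mem_of_adj_of_adj hv.2 hzI (fun e => hzW (e ▸ hv.1)) hvu.symm h.symm)
  have hOre_zu := hOre z u (fun e => hu (e ▸ hzI)) hzu
  have hdeg_z := hW.degree_le_card_compl hzW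
  have hdeg_u := hI.degree_le_card_compl hu
  have hsplit := card_inter_add_card_sdiff W I
  rw [sdiff_eq_inter_compl, inter_eq_right.mpr hIW] at hsplit
  rw [card_compl] at *
  have := card_le_univ W
  omega

theorem card_inter_le_two (hOre : OreCondition G (Fintype.card V - 2))
    (hI : IsBootClosed G 2 I) (hImax : ∀ A : Finset V, #A = 2 → #(bootClosure G 2 A) ≤ #I)
    (hW : IsBootClosed G 2 W) (hWI : #W ≤ #I) (hv : v ∈ W ∩ I)
    (hv2 : 2 ≤ #(G.neighborFinset v ∩ Iᶜ)) (hvW : G.neighborFinset v ∩ Iᶜ ⊆ W) :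
    #(W ∩ I) ≤ 2 := by
  obtain ⟨u₁, hu₁, u₂, hu₂, hne⟩ := one_lt_card.mp hv2
  have hu₁W := hvW hu₁
  have hu₂W := hvW hu₂
  simp only [mem_inter, mem_neighborFinset, mem_compl] at hu₁ hu₂
  by_cases hclique : G.IsClique (Iᶜ : Set V)
  · have hIW : Iᶜ ⊆ W := hW.subset_of_isClique (by simpa using hclique)
      (by simp [hu₁.2, hu₁W]) (by simp [hu₂.2, hu₂W]) hne
    exact card_inter_le_two_of_compl_subset hOre hI hW hWI hIW hv hu₁.2 hu₁.1
  · obtain ⟨u, hu, u', hu', hne', hnadj⟩ : ∃ u ∉ I, ∃ u' ∉ I, u ≠ u' ∧ ¬ G.Adj u u' := by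
      simpa [IsClique, Set.Pairwise] using hclique
    have := card_le_three_of_not_adj hOre hI hImax hu hu' hne' hnadj (mem_inter.mp hv).2 hv2
    have : #(W ∩ I) < #W := card_lt_card
      ⟨inter_subset_left, fun h => hu₁.2 (mem_inter.mp (h hu₁W)).2⟩
    omega

end MaximalClosure

end SimpleGraph

open SimpleGraph

theorem stmt10_general {V : Type*} [Fintype V] (G : SimpleGraph V)
    (hdeg : ∀ x y : V, x ≠ y → ¬ G.Adj x y →
      Fintype.card V - 2 ≤ G.degree x + G.degree y)
    (I : Finset V)
    (hIcl : ∃ A : Finset V, A.card = 2 ∧ I = bootClosure G 2 A)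
    (hImax : ∀ A : Finset V, A.card = 2 → (bootClosure G 2 A).card ≤ I.card)
    (v : V) (hv : v ∈ I)
    (hv2 : 2 ≤ (G.neighborFinset v ∩ (Finset.univ \ I)).card) :
    ∀ a ∈ G.neighborFinset v ∩ I, ∀ b ∈ G.neighborFinset v ∩ I, ¬ G.Adj a b := by
  intro a ha b hb hab
  obtain ⟨A, -, rfl⟩ := hIcl
  have hI := isBootClosed_bootClosure (G := G) (r := 2) A
  set I := bootClosure G 2 A
  rw [← compl_eq_univ_sdiff] at hv2
  obtain ⟨u₁, hu₁⟩ := card_pos.mp (by omega : 0 < #(G.neighborFinset v ∩ Iᶜ))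
  have hclique := isClique_neighborFinset_inter_compl hdeg hI hImax hv
  simp only [mem_inter, mem_neighborFinset, mem_compl] at ha hb hu₁
  set W := bootClosure G 2 {a, u₁}
  have hW : IsBootClosed G 2 W := isBootClosed_bootClosure _
  have hau₁ : a ≠ u₁ := fun h => hu₁.2 (h ▸ ha.2)
  have haW : a ∈ W := subset_bootClosure _ (by simp)
  have hu₁W : u₁ ∈ W := subset_bootClosure _ (by simp)
  have hvW : v ∈ W := hW.mem_of_adj_of_adj haW hu₁W hau₁ ha.1 hu₁.1
  have hbW : b ∈ W := hW.mem_of_adj_of_adj haW hvW (G.ne_of_adj ha.1).symm hab.symm hb.1.symm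
  have hUW : G.neighborFinset v ∩ Iᶜ ⊆ W := fun u hu => by
    by_cases hu₁u : u = u₁
    · exact hu₁u ▸ hu₁W
    exact hW.mem_of_adj_of_adj hvW hu₁W (G.ne_of_adj hu₁.1)
      ((G.mem_neighborFinset v u).mp (mem_inter.mp hu).1).symm
      (hclique (mem_coe.mpr hu) (by simp [hu₁]) hu₁u)
  have hvab : #{v, a, b} = 3 := card_eq_three.mpr
    ⟨v, a, b, G.ne_of_adj ha.1, G.ne_of_adj hb.1, G.ne_of_adj hab, rfl⟩
  have h3 : 3 ≤ #(W ∩ I) :=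
    hvab ▸ card_le_card (by simp [insert_subset_iff, hvW, haW, hbW, hv, ha.2, hb.2])
  have := card_inter_le_two hdeg hI hImax hW (hImax _ (card_pair hau₁)) (mem_inter.mpr ⟨hvW, hv⟩)
    hv2 hUW
  omega

theorem stmt10 {V : Type*} [Fintype V] (G : SimpleGraph V)
    (hconn : G.Connected) (hn : 12 ≤ Fintype.card V)
    (hdeg : ∀ x y : V, x ≠ y → ¬ G.Adj x y →
      Fintype.card V - 2 ≤ G.degree x + G.degree y)
    (hm : 2 < minContagious G 2)
    (I : Finset V)
    (hIcl : ∃ A : Finset V, A.card = 2 ∧ I = bootClosure G 2 A)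
    (hImax : ∀ A : Finset V, A.card = 2 → (bootClosure G 2 A).card ≤ I.card)
    (v : V) (hv : v ∈ I)
    (hv2 : 2 ≤ (G.neighborFinset v ∩ (Finset.univ \ I)).card) :
    ∀ a ∈ G.neighborFinset v ∩ I, ∀ b ∈ G.neighborFinset v ∩ I, ¬ G.Adj a b :=
  stmt10_general G hdeg I hIcl hImax v hv hv2
end
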